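/- arXiv:1507.03293 — 4 statements merged into one kernel-verified Lean document; each statement's English description precedes it below -/
import Mathlib

section
/- Let a ∈ ℝ and β, η, ν > 0, and let f : ℝ → ℝ be feasible for the worst-case tail problem with parameters (a, β, η, ν). Then x·f(x) → 0 and x²·f′₊(x) → 0 as x → ∞, where f′₊ denotes the right derivative of f. -/
open MeasureTheory Set Filter Topology

/-- The right derivative of `f` at `x`: the derivative within `(x, ∞)`. -/
noncomputable def rightDeriv (f : ℝ → ℝ) (x : ℝ) : ℝ := derivWithin f (Set.Ioi x) x

/-- The right derivative of `f` exists at `x`. -/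
def HasRightDerivAt (f : ℝ → ℝ) (x : ℝ) : Prop := ∃ d : ℝ, HasDerivWithinAt f d (Set.Ioi x) x

/-- `f` is feasible for the worst-case tail problem with parameters `(a, β, η, ν)`. -/
def Feasible (a β η ν : ℝ) (f : ℝ → ℝ) : Prop :=
  IntegrableOn f (Set.Ioi a) ∧
  (∫ x in Set.Ioi a, f x) = β ∧
  f a = η ∧
  ContinuousWithinAt f (Set.Ici a) a ∧
  HasRightDerivAt f a ∧
  -ν ≤ rightDeriv f a ∧
  ConvexOn ℝ (Set.Ici a) f ∧
  (∀ x, a ≤ x → 0 ≤ f x)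

/-- If `f` is integrable on `(y, ∞)` it cannot be bounded below there by a positive constant. -/
lemma no_const_lower_bound {f : ℝ → ℝ} {y c : ℝ} (hInt : IntegrableOn f (Set.Ioi y))
    (hc : 0 < c) (h : ∀ z, y < z → c ≤ f z) : False := by
  have hconst : IntegrableOn (fun _ => c) (Set.Ioi y) := by
    refine hInt.mono' aestronglyMeasurable_const ?_
    refine ae_restrict_of_forall_mem measurableSet_Ioi fun z hz => ?_
    rw [Real.norm_eq_abs, abs_of_pos hc]
    exact h z hz
  rw [integrableOn_const_iff] at hconst
  rcases hconst with h0 | hfin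
  · exact hc.ne' (by simpa using h0)
  · rw [Real.volume_Ioi] at hfin
    exact (lt_irrefl _ hfin)

/-- A convex, nonnegative, integrable function on `[a, ∞)` is antitone there. -/
lemma feasible_antitoneOn {f : ℝ → ℝ} {a : ℝ} (hconv : ConvexOn ℝ (Set.Ici a) f)
    (hInt : IntegrableOn f (Set.Ioi a)) (hpos : ∀ x, a ≤ x → 0 ≤ f x) :
    AntitoneOn f (Set.Ici a) := by
  intro x hx y hy hxy
  by_contra hlt
  push_neg at hlt
  have hxy' : x < y := lt_of_le_of_ne hxy (by rintro rfl; exact lt_irrefl _ hlt)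
  have hfy : 0 < f y := lt_of_le_of_lt (hpos x hx) hlt
  refine no_const_lower_bound (hInt.mono_set (Ioi_subset_Ioi (le_trans hx hxy'.le)))
    hfy fun z hz => ?_
  have hz' : y < z := hz
  have hzI : z ∈ Set.Ici a := le_trans hx (hxy'.trans hz').le
  have hs := hconv.slope_mono hx ⟨hy, hxy'.ne'⟩ ⟨hzI, (hxy'.trans hz').ne'⟩ hz'.le
  rw [slope_def_field, slope_def_field] at hs
  rw [div_le_div_iff₀ (by linarith) (by linarith)] at hs
  nlinarith

/-- A convex function on `[a, ∞)` has a right derivative at every `x > a`. -/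
lemma convex_hasDerivWithinAt_Ioi {f : ℝ → ℝ} {a x : ℝ} (hconv : ConvexOn ℝ (Set.Ici a) f)
    (hx : a < x) : HasDerivWithinAt f (rightDeriv f x) (Set.Ioi x) x := by
  have hmono : MonotoneOn (slope f x) (Set.Ioi x) := fun y hy z hz hyz =>
    hconv.slope_mono (le_of_lt hx) ⟨(hx.trans hy).le, ne_of_gt hy⟩
      ⟨(hx.trans hz).le, ne_of_gt hz⟩ hyz
  have hbdd : BddBelow (slope f x '' Set.Ioi x) := by
    refine ⟨slope f x a, ?_⟩
    rintro w ⟨y, hy, rfl⟩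
    exact hconv.slope_mono hx.le ⟨le_refl a, hx.ne⟩ ⟨(hx.trans hy).le, ne_of_gt hy⟩
      (hx.trans hy).le
  have htend := MonotoneOn.tendsto_nhdsGT hmono hbdd
  have H : HasDerivWithinAt f (sInf (slope f x '' Set.Ioi x)) (Set.Ioi x) x :=
    (hasDerivWithinAt_iff_tendsto_slope' notMem_Ioi_self).2 htend
  have heq : rightDeriv f x = sInf (slope f x '' Set.Ioi x) :=
    H.derivWithin (uniqueDiffWithinAt_Ioi x)
  rw [heq]; exact H

/-- Lower bound on the right derivative by a left slope. -/
lemma slope_le_rightDeriv {f : ℝ → ℝ} {a w x : ℝ} (hconv : ConvexOn ℝ (Set.Ici a) f)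
    (hw : a ≤ w) (hwx : w < x) : slope f x w ≤ rightDeriv f x := by
  have hx : a < x := lt_of_le_of_lt hw hwx
  have H := convex_hasDerivWithinAt_Ioi hconv hx
  have htend := (hasDerivWithinAt_iff_tendsto_slope' notMem_Ioi_self).1 H
  refine ge_of_tendsto htend ?_
  filter_upwards [self_mem_nhdsWithin] with y hy
  exact hconv.slope_mono hx.le ⟨hw, hwx.ne⟩ ⟨(hx.trans hy).le, ne_of_gt hy⟩
    (hwx.trans hy).le

/-- Lemma (tail): for any feasible `f`, `x f(x) → 0` and `x² f′₊(x) → 0` as `x → ∞`. -/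
theorem tail_decay
    (a β η ν : ℝ) (hβ : 0 < β) (hη : 0 < η) (hν : 0 < ν)
    (f : ℝ → ℝ) (hf : Feasible a β η ν f) :
    Tendsto (fun x => x * f x) atTop (𝓝 0) ∧
    Tendsto (fun x => x ^ 2 * rightDeriv f x) atTop (𝓝 0) := by
  obtain ⟨hInt, hIβ, hfa, hcont, hda, hνd, hconv, hpos⟩ := hf
  have hanti : AntitoneOn f (Set.Ici a) := feasible_antitoneOn hconv hInt hpos
  -- interval integrability on subintervals of [a, ∞)
  have hii : ∀ u v : ℝ, a ≤ u → u ≤ v → IntervalIntegrable f volume u v := by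
    intro u v hu huv
    rw [intervalIntegrable_iff, uIoc_of_le huv]
    exact hInt.mono_set fun t ht => lt_of_le_of_lt hu ht.1
  -- the tail integrals over [x/2, x] tend to 0
  have hhalf : Tendsto (fun x : ℝ => x / 2) atTop atTop :=
    Tendsto.atTop_div_const two_pos tendsto_id
  have hT : Tendsto (fun x => ∫ t in a..x, f t) atTop (𝓝 (∫ t in Set.Ioi a, f t)) :=
    intervalIntegral_tendsto_integral_Ioi a hInt tendsto_id
  have hT2 : Tendsto (fun x => ∫ t in a..(x / 2), f t) atTop (𝓝 (∫ t in Set.Ioi a, f t)) :=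
    intervalIntegral_tendsto_integral_Ioi a hInt hhalf
  have hg : Tendsto (fun x => 2 * ((∫ t in a..x, f t) - ∫ t in a..(x / 2), f t))
      atTop (𝓝 0) := by
    have := (hT.sub hT2).const_mul 2
    simpa using this
  -- key pointwise bound
  have hkey : ∀ᶠ x in atTop, 0 ≤ x * f x ∧
      x * f x ≤ 2 * ((∫ t in a..x, f t) - ∫ t in a..(x / 2), f t) := by
    filter_upwards [eventually_gt_atTop (2 * a), eventually_gt_atTop 0] with x hxa hx0
    have ha2 : a < x / 2 := by linarith
    have hax : a ≤ x := by linarith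
    have hhx : x / 2 ≤ x := by linarith
    constructor
    · exact mul_nonneg hx0.le (hpos x hax)
    · have hsub : (∫ t in a..x, f t) - (∫ t in a..(x / 2), f t) = ∫ t in (x / 2)..x, f t :=
        intervalIntegral.integral_interval_sub_left (hii a x le_rfl hax)
          (hii a (x / 2) le_rfl ha2.le)
      have hmono : (∫ t in (x / 2)..x, (fun _ => f x) t) ≤ ∫ t in (x / 2)..x, f t := by
        refine intervalIntegral.integral_mono_on hhx intervalIntegrable_const
          (hii (x / 2) x ha2.le hhx) fun t ht => ?_
        exact hanti (le_trans ha2.le ht.1) hax ht.2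
      rw [intervalIntegral.integral_const, smul_eq_mul] at hmono
      rw [hsub]
      nlinarith
  have part1 : Tendsto (fun x => x * f x) atTop (𝓝 0) := by
    refine tendsto_of_tendsto_of_tendsto_of_le_of_le' tendsto_const_nhds hg
      (hkey.mono fun x hx => hx.1) (hkey.mono fun x hx => hx.2)
  refine ⟨part1, ?_⟩
  -- part 2
  have part1half : Tendsto (fun x => (x / 2) * f (x / 2)) atTop (𝓝 0) :=
    part1.comp hhalf
  have hlow : Tendsto (fun x => -(4 * ((x / 2) * f (x / 2)))) atTop (𝓝 0) := by
    have := (part1half.const_mul 4).neg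
    simpa using this
  refine tendsto_of_tendsto_of_tendsto_of_le_of_le' hlow tendsto_const_nhds ?_ ?_
  · -- lower bound
    filter_upwards [eventually_gt_atTop (2 * a), eventually_gt_atTop 0] with x hxa hx0
    have ha2 : a < x / 2 := by linarith
    have hx : a < x := by linarith
    have hs := slope_le_rightDeriv hconv ha2.le (by linarith : x / 2 < x)
    rw [slope_def_field] at hs
    have hd : (f (x / 2) - f x) / (x / 2 - x) ≤ rightDeriv f x := hs
    have h1 : f x - f (x / 2) ≤ rightDeriv f x * (x / 2) := by
      have hne : x / 2 - x = -(x / 2) := by ring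
      rw [hne, div_neg, neg_le] at hd
      have h2 := (le_div_iff₀ (by linarith : (0:ℝ) < x / 2)).1 hd
      nlinarith
    have hfx : 0 ≤ f x := hpos x hx.le
    nlinarith [mul_le_mul_of_nonneg_left h1 (by linarith : (0:ℝ) ≤ 2 * x)]
  · -- upper bound: rightDeriv f x ≤ 0
    filter_upwards [eventually_gt_atTop (2 * a), eventually_gt_atTop 0] with x hxa hx0
    have hx : a < x := by linarith
    have H := convex_hasDerivWithinAt_Ioi hconv hx
    have hub : rightDeriv f x ≤ slope f x (x + 1) :=
      hconv.rightDeriv_le_slope hx.le (by linarith : a ≤ x + 1) (lt_add_one x)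
        H.differentiableWithinAt
    rw [slope_def_field] at hub
    have hmono : f (x + 1) ≤ f x := hanti hx.le (by linarith : a ≤ x + 1) (by linarith)
    have hd0 : rightDeriv f x ≤ 0 := by
      refine hub.trans ?_
      rw [div_nonpos_iff]
      right; constructor <;> linarith
    nlinarith [sq_nonneg x]
end

section
/- Let a ∈ ℝ, β, η, ν > 0, and let h : ℝ → ℝ be bounded and measurable. Then the optimal value of OPT(𝒫⁺) equals the optimal value of OPT(𝒫₃⁺); that is, the supremum of ν E_P[H(X)] over Borel probability measures P on [0, ∞) with E_P[X] = μ and E_P[X²] = σ equals the supremum of the same quantity over probability measures on [0, ∞) supported on at most 3 points satisfying the same two moment constraints. -/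
open MeasureTheory Set Filter Topology

/-- `H(x) = ∫₀ˣ ∫₀ᵘ h(v + a) dv du`. -/
noncomputable def Hfun (a : ℝ) (h : ℝ → ℝ) (x : ℝ) : ℝ :=
  ∫ u in (0:ℝ)..x, (∫ v in (0:ℝ)..u, h (v + a))

/-- `P` is a Borel probability measure on `[0, ∞)` (modelled as a measure on `ℝ`
concentrated on `[0, ∞)`) with first moment `μ` and second moment `σ`. -/
def MomFeasible (μ σ : ℝ) (P : Measure ℝ) : Prop :=
  IsProbabilityMeasure P ∧ P (Set.Iio 0) = 0 ∧
  Integrable (fun x => x) P ∧ Integrable (fun x => x ^ 2) P ∧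
  (∫ x, x ∂P) = μ ∧ (∫ x, x ^ 2 ∂P) = σ

/-- The measure `P` is supported on at most `n` points. -/
def SuppAtMost (n : ℕ) (P : Measure ℝ) : Prop :=
  ∃ s : Finset ℝ, s.card ≤ n ∧ P ((s : Set ℝ)ᶜ) = 0

section HfunLemmas
variable {a M : ℝ} {h : ℝ → ℝ}

lemma bdd_intervalIntegrable (hm : Measurable h) (hbd : ∀ x, |h x| ≤ M) (c d : ℝ) :
    IntervalIntegrable (fun v => h (v + a)) volume c d := by
  have hmeas : Measurable fun v => h (v + a) := hm.comp (measurable_id.add_const a)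
  rw [intervalIntegrable_iff]
  have : IsFiniteMeasure (volume.restrict (Set.uIoc c d)) := by
    constructor
    rw [Measure.restrict_apply_univ]
    rw [Set.uIoc, Real.volume_Ioc]
    exact ENNReal.ofReal_lt_top
  exact ⟨(hmeas.aestronglyMeasurable), HasFiniteIntegral.of_bounded
    (C := M) (Eventually.of_forall fun x => by simpa using hbd (x + a))⟩

lemma inner_cont (hm : Measurable h) (hbd : ∀ x, |h x| ≤ M) :
    Continuous fun u => ∫ v in (0:ℝ)..u, h (v + a) := by
  exact intervalIntegral.continuous_primitive
    (fun c d => bdd_intervalIntegrable hm hbd c d) 0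

lemma inner_bound (hm : Measurable h) (hbd : ∀ x, |h x| ≤ M) (u : ℝ) :
    |∫ v in (0:ℝ)..u, h (v + a)| ≤ M * |u| := by
  have := intervalIntegral.norm_integral_le_of_norm_le_const
    (a := 0) (b := u) (C := M) (f := fun v => h (v + a))
    (fun x _ => by simpa using hbd (x + a))
  simpa [Real.norm_eq_abs] using this

lemma Hfun_continuous (hm : Measurable h) (hbd : ∀ x, |h x| ≤ M) :
    Continuous (Hfun a h) := by
  exact intervalIntegral.continuous_primitive
    (fun c d => ((inner_cont hm hbd)).intervalIntegrable c d) 0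

lemma M_nonneg (hbd : ∀ x, |h x| ≤ M) : 0 ≤ M := le_trans (abs_nonneg _) (hbd 0)

lemma Hfun_bound (hm : Measurable h) (hbd : ∀ x, |h x| ≤ M) (x : ℝ) :
    |Hfun a h x| ≤ M * x ^ 2 := by
  have hb : ∀ u ∈ Set.uIoc (0:ℝ) x, ‖∫ v in (0:ℝ)..u, h (v + a)‖ ≤ M * |x| := by
    intro u hu
    rw [Real.norm_eq_abs]
    refine le_trans (inner_bound hm hbd u) ?_
    have : |u| ≤ |x| := by
      rcases hu with hu
      rw [Set.mem_uIoc] at hu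
      rcases hu with ⟨h1, h2⟩ | ⟨h1, h2⟩
      · rw [abs_of_pos h1, abs_of_nonneg (le_trans h1.le h2)]; exact h2
      · rw [abs_of_nonpos h2, abs_of_nonpos (le_of_lt (lt_of_lt_of_le h1 h2))]
        exact neg_le_neg (le_of_lt h1)
    exact mul_le_mul_of_nonneg_left this (M_nonneg hbd)
  have := intervalIntegral.norm_integral_le_of_norm_le_const (C := M * |x|) hb
  rw [Real.norm_eq_abs, sub_zero] at this
  calc |Hfun a h x| ≤ M * |x| * |x| := this
    _ = M * x ^ 2 := by rw [mul_assoc, ← abs_mul, ← pow_two, abs_of_nonneg (sq_nonneg x)]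

lemma Hfun_zero (a : ℝ) (h : ℝ → ℝ) : Hfun a h 0 = 0 := intervalIntegral.integral_same

end HfunLemmas

section Reduce
variable {ι : Type*} [DecidableEq ι]

lemma elimStep (z : ι → ℝ × ℝ × ℝ) (t : Finset ι) (ht : 4 ≤ t.card)
    (w : ι → ℝ) (hw0 : ∀ i ∈ t, 0 ≤ w i) (hwne : ∀ i ∈ t, w i ≠ 0)
    (hw1 : ∑ i ∈ t, w i = 1) :
    ∃ w₂ : ι → ℝ, (∀ i ∈ t, 0 ≤ w₂ i) ∧ (∃ j ∈ t, w₂ j = 0) ∧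
      ∑ i ∈ t, w₂ i = 1 ∧
      ∑ i ∈ t, w₂ i * (z i).1 = ∑ i ∈ t, w i * (z i).1 ∧
      ∑ i ∈ t, w₂ i * (z i).2.1 = ∑ i ∈ t, w i * (z i).2.1 ∧
      ∑ i ∈ t, w i * (z i).2.2 ≤ ∑ i ∈ t, w₂ i * (z i).2.2 := by
  classical
  -- linear dependence of the vectors (1, x, x²)
  set v : t → (Fin 3 → ℝ) := fun i => ![1, (z i).1, (z i).2.1] with hv
  have hnli : ¬ LinearIndependent ℝ v := by
    intro hli
    have hc := hli.fintype_card_le_finrank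
    rw [Module.finrank_pi ℝ] at hc
    simp [Fintype.card_coe] at hc
    omega
  obtain ⟨g, hgsum, i₀, hgi₀⟩ := Fintype.not_linearIndependent_iff.mp hnli
  -- coordinates of the relation
  have hcoord : ∀ m : Fin 3, ∑ i : t, g i * v i m = 0 := by
    intro m
    have := congrFun hgsum m
    simpa [Finset.sum_apply] using this
  have hrel0 : ∑ i : t, g i = 0 := by simpa [hv] using hcoord 0
  have hrel1 : ∑ i : t, g i * (z i).1 = 0 := by simpa [hv] using hcoord 1
  have hrel2 : ∑ i : t, g i * (z i).2.1 = 0 := by simpa [hv] using hcoord 2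
  -- fix the sign so the objective direction is nonnegative
  have hex : ∃ c : t → ℝ, (∑ i : t, c i = 0) ∧ (∑ i : t, c i * (z i).1 = 0) ∧
      (∑ i : t, c i * (z i).2.1 = 0) ∧ (0 ≤ ∑ i : t, c i * (z i).2.2) ∧ c i₀ ≠ 0 := by
    rcases le_or_gt 0 (∑ i : t, g i * (z i).2.2) with hsg | hsg
    · exact ⟨g, hrel0, hrel1, hrel2, hsg, hgi₀⟩
    · have e0 : ∑ i : t, (-g) i = 0 := by
        simp only [Pi.neg_apply, Finset.sum_neg_distrib, hrel0, neg_zero]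
      have e1 : ∑ i : t, (-g) i * (z i).1 = 0 := by
        simp only [Pi.neg_apply, neg_mul, Finset.sum_neg_distrib, hrel1, neg_zero]
      have e2 : ∑ i : t, (-g) i * (z i).2.1 = 0 := by
        simp only [Pi.neg_apply, neg_mul, Finset.sum_neg_distrib, hrel2, neg_zero]
      have e3 : 0 ≤ ∑ i : t, (-g) i * (z i).2.2 := by
        have : ∑ i : t, (-g) i * (z i).2.2 = -∑ i : t, g i * (z i).2.2 := by
          simp only [Pi.neg_apply, neg_mul, Finset.sum_neg_distrib]
        rw [this]; linarith
      exact ⟨-g, e0, e1, e2, e3, by simpa using hgi₀⟩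
  obtain ⟨c, hcrel0, hcrel1, hcrel2, hcrel3, hcne⟩ := hex
  -- some coordinate is negative
  have hneg : ∃ i : t, c i < 0 := by
    by_contra hcon
    push_neg at hcon
    have : ∀ i ∈ (Finset.univ : Finset t), c i = 0 :=
      (Finset.sum_eq_zero_iff_of_nonneg (fun i _ => hcon i)).mp hcrel0
    exact hcne (this i₀ (Finset.mem_univ _))
  obtain ⟨ineg, hineg⟩ := hneg
  -- minimal ratio
  obtain ⟨j, hjmem, hjmin⟩ := Finset.exists_min_image
    (Finset.univ.filter fun i : t => c i < 0) (fun i => w i / (-c i))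
    ⟨ineg, by simp [hineg]⟩
  have hcj : c j < 0 := (Finset.mem_filter.mp hjmem).2
  set s : ℝ := w j / (-c j) with hs
  have hwj : 0 < w j := lt_of_le_of_ne (hw0 j j.2) (Ne.symm (hwne j j.2))
  have hspos : 0 < s := div_pos hwj (by linarith)
  -- new weights
  set w₂ : ι → ℝ := fun i => if hi : i ∈ t then w i + s * c ⟨i, hi⟩ else 0 with hw₂
  have hw₂coe : ∀ i : t, w₂ i = w i + s * c i := by
    intro i
    simp only [hw₂, dif_pos i.2]
  have hsum : ∀ F : ι → ℝ, ∑ i ∈ t, w₂ i * F i = ∑ i ∈ t, w i * F i + s * ∑ i : t, c i * F i := by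
    intro F
    rw [← Finset.sum_coe_sort t (fun i => w₂ i * F i), ← Finset.sum_coe_sort t (fun i => w i * F i)]
    rw [Finset.mul_sum, ← Finset.sum_add_distrib]
    refine Finset.sum_congr rfl fun i _ => ?_
    rw [hw₂coe i]; ring
  refine ⟨w₂, ?_, ⟨j, j.2, ?_⟩, ?_, ?_, ?_, ?_⟩
  · intro i hi
    rw [show w₂ i = w i + s * c ⟨i, hi⟩ from by simp only [hw₂, dif_pos hi]]
    rcases le_or_gt 0 (c ⟨i, hi⟩) with hci | hci
    · have := hw0 i hi
      nlinarith
    · have hmin := hjmin ⟨i, hi⟩ (by simp [hci])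
      rw [hs] at hmin ⊢
      rw [div_le_div_iff₀ (by linarith) (by linarith)] at hmin
      have h1 : s * (-c ⟨i, hi⟩) ≤ w i := by
        rw [hs, div_mul_eq_mul_div, div_le_iff₀ (by linarith)]
        nlinarith [hw0 i hi]
      nlinarith
  · have hcjne : c j ≠ 0 := ne_of_lt hcj
    rw [hw₂coe j, hs, div_mul_eq_mul_div, mul_div_assoc, div_neg, div_self hcjne]
    ring
  · have h2 := hsum (fun _ => 1)
    simp only [mul_one] at h2
    rw [h2, hw1, hcrel0, mul_zero, add_zero]
  · rw [hsum, hcrel1, mul_zero, add_zero]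
  · rw [hsum, hcrel2, mul_zero, add_zero]
  · rw [hsum]
    nlinarith

lemma reduceTo3 (z : ι → ℝ × ℝ × ℝ) :
    ∀ n : ℕ, ∀ t : Finset ι, t.card ≤ n → ∀ w : ι → ℝ, (∀ i ∈ t, 0 ≤ w i) →
      ∑ i ∈ t, w i = 1 →
    ∃ t' : Finset ι, t' ⊆ t ∧ t'.card ≤ 3 ∧ ∃ w' : ι → ℝ,
      (∀ i ∈ t', 0 ≤ w' i) ∧ ∑ i ∈ t', w' i = 1 ∧
      ∑ i ∈ t', w' i * (z i).1 = ∑ i ∈ t, w i * (z i).1 ∧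
      ∑ i ∈ t', w' i * (z i).2.1 = ∑ i ∈ t, w i * (z i).2.1 ∧
      ∑ i ∈ t, w i * (z i).2.2 ≤ ∑ i ∈ t', w' i * (z i).2.2 := by
  intro n
  induction n with
  | zero =>
    intro t hcard w hw0 hw1
    exact ⟨t, Finset.Subset.refl t, le_trans hcard (by norm_num), w, hw0, hw1, rfl, rfl, le_rfl⟩
  | succ n ih =>
    intro t hcard w hw0 hw1
    by_cases h3 : t.card ≤ 3
    · exact ⟨t, Finset.Subset.refl t, h3, w, hw0, hw1, rfl, rfl, le_rfl⟩
    push_neg at h3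
    have h4 : 4 ≤ t.card := h3
    by_cases hz : ∃ j ∈ t, w j = 0
    · obtain ⟨j, hjt, hwj⟩ := hz
      have hcard' : (t.erase j).card ≤ n := by
        rw [Finset.card_erase_of_mem hjt]
        omega
      have hsE : ∀ F : ι → ℝ, ∑ i ∈ t.erase j, w i * F i = ∑ i ∈ t, w i * F i :=
        fun F => Finset.sum_erase t (by rw [hwj, zero_mul])
      have hw1' : ∑ i ∈ t.erase j, w i = 1 := by
        rw [Finset.sum_erase t hwj]; exact hw1
      obtain ⟨t', ht'sub, ht'card, w', hw'0, hw'1, he1, he2, hle3⟩ :=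
        ih (t.erase j) hcard' w (fun i hi => hw0 i (Finset.mem_of_mem_erase hi)) hw1'
      exact ⟨t', ht'sub.trans (Finset.erase_subset j t), ht'card, w', hw'0, hw'1,
        he1.trans (hsE _), he2.trans (hsE _), le_trans (le_of_eq (hsE _).symm) hle3⟩
    · push_neg at hz
      obtain ⟨w₂, hw₂0, ⟨j, hjt, hw₂j⟩, hw₂1, he1, he2, hle3⟩ :=
        elimStep z t h4 w hw0 hz hw1
      have hcard' : (t.erase j).card ≤ n := by
        rw [Finset.card_erase_of_mem hjt]
        omega
      have hsE : ∀ F : ι → ℝ, ∑ i ∈ t.erase j, w₂ i * F i = ∑ i ∈ t, w₂ i * F i :=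
        fun F => Finset.sum_erase t (by rw [hw₂j, zero_mul])
      have hw₂1' : ∑ i ∈ t.erase j, w₂ i = 1 := by
        rw [Finset.sum_erase t hw₂j]; exact hw₂1
      obtain ⟨t', ht'sub, ht'card, w', hw'0, hw'1, hf1, hf2, hf3⟩ :=
        ih (t.erase j) hcard' w₂ (fun i hi => hw₂0 i (Finset.mem_of_mem_erase hi)) hw₂1'
      refine ⟨t', ht'sub.trans (Finset.erase_subset j t), ht'card, w', hw'0, hw'1, ?_, ?_, ?_⟩
      · rw [hf1, hsE, he1]
      · rw [hf2, hsE, he2]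
      · calc ∑ i ∈ t, w i * (z i).2.2 ≤ ∑ i ∈ t, w₂ i * (z i).2.2 := hle3
          _ = ∑ i ∈ t.erase j, w₂ i * (z i).2.2 := (hsE _).symm
          _ ≤ ∑ i ∈ t', w' i * (z i).2.2 := hf3

end Reduce

lemma integrable_dirac_meas {f : ℝ → ℝ} (hf : Measurable f) (x : ℝ) :
    Integrable f (Measure.dirac x) := by
  have : f =ᵐ[Measure.dirac x] fun _ => f x := ae_eq_dirac' hf
  exact (integrable_congr this.symm).mp (integrable_const _)

lemma finMeasure {ι : Type*} [DecidableEq ι] (t : Finset ι) (x : ι → ℝ)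
    (hx : ∀ i ∈ t, 0 ≤ x i) (w : ι → ℝ) (hw0 : ∀ i ∈ t, 0 ≤ w i)
    (hw1 : ∑ i ∈ t, w i = 1) :
    ∃ Q : Measure ℝ, IsProbabilityMeasure Q ∧ Q (Set.Iio 0) = 0 ∧
      Q ((↑(t.image x) : Set ℝ)ᶜ) = 0 ∧
      ∀ f : ℝ → ℝ, Measurable f →
        Integrable f Q ∧ ∫ y, f y ∂Q = ∑ i ∈ t, w i * f (x i) := by
  classical
  set Q : Measure ℝ := ∑ i ∈ t, ENNReal.ofReal (w i) • Measure.dirac (x i) with hQ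
  have happ : ∀ s : Set ℝ, MeasurableSet s →
      Q s = ∑ i ∈ t, ENNReal.ofReal (w i) * (Measure.dirac (x i)) s := by
    intro s hs
    rw [hQ, Measure.finset_sum_apply]
    refine Finset.sum_congr rfl fun i _ => ?_
    rw [Measure.smul_apply, smul_eq_mul]
  have hprob : IsProbabilityMeasure Q := by
    constructor
    rw [happ _ MeasurableSet.univ]
    have : ∀ i ∈ t, ENNReal.ofReal (w i) * (Measure.dirac (x i)) Set.univ
        = ENNReal.ofReal (w i) := by
      intro i _
      rw [measure_univ, mul_one]
    rw [Finset.sum_congr rfl this, ← ENNReal.ofReal_sum_of_nonneg hw0, hw1,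
      ENNReal.ofReal_one]
  have hIio : Q (Set.Iio 0) = 0 := by
    rw [happ _ measurableSet_Iio]
    refine Finset.sum_eq_zero fun i hi => ?_
    rw [Measure.dirac_apply' _ measurableSet_Iio]
    have : x i ∉ Set.Iio (0:ℝ) := not_lt.mpr (hx i hi)
    rw [Set.indicator_of_notMem this, mul_zero]
  have hsupp : Q ((↑(t.image x) : Set ℝ)ᶜ) = 0 := by
    rw [happ _ (t.image x).measurableSet.compl]
    refine Finset.sum_eq_zero fun i hi => ?_
    rw [Measure.dirac_apply' _ (t.image x).measurableSet.compl]
    have : x i ∈ (↑(t.image x) : Set ℝ) := by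
      simp only [Finset.coe_image, Set.mem_image]
      exact ⟨i, by simpa using hi, rfl⟩
    rw [Set.indicator_of_notMem (by simpa using this), mul_zero]
  refine ⟨Q, hprob, hIio, hsupp, fun f hf => ?_⟩
  have hint : ∀ i ∈ t, Integrable f (ENNReal.ofReal (w i) • Measure.dirac (x i)) :=
    fun i _ => (integrable_dirac_meas hf (x i)).smul_measure ENNReal.ofReal_ne_top
  constructor
  · rw [hQ]; exact integrable_finset_sum_measure.mpr hint
  · rw [hQ, integral_finset_sum_measure hint]
    refine Finset.sum_congr rfl fun i hi => ?_
    rw [integral_smul_measure, integral_dirac' f (x i) hf.stronglyMeasurable,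
      ENNReal.toReal_ofReal (hw0 i hi), smul_eq_mul]

lemma sum_coord1 {ι : Type*} (t : Finset ι) (F : ι → ℝ × ℝ × ℝ) :
    (∑ i ∈ t, F i).1 = ∑ i ∈ t, (F i).1 := by
  classical
  induction t using Finset.induction with
  | empty => simp
  | @insert _ _ h ih => simp [Finset.sum_insert h, ih]

lemma sum_coord21 {ι : Type*} (t : Finset ι) (F : ι → ℝ × ℝ × ℝ) :
    (∑ i ∈ t, F i).2.1 = ∑ i ∈ t, (F i).2.1 := by
  classical
  induction t using Finset.induction with
  | empty => simp
  | @insert _ _ h ih => simp [Finset.sum_insert h, ih]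

lemma sum_coord22 {ι : Type*} (t : Finset ι) (F : ι → ℝ × ℝ × ℝ) :
    (∑ i ∈ t, F i).2.2 = ∑ i ∈ t, (F i).2.2 := by
  classical
  induction t using Finset.induction with
  | empty => simp
  | @insert _ _ h ih => simp [Finset.sum_insert h, ih]
lemma hull_to_point {a M : ℝ} {h : ℝ → ℝ} (hm : Measurable h) (hbd : ∀ x, |h x| ≤ M)
    (q : ℝ × ℝ × ℝ)
    (hq : q ∈ convexHull ℝ ((fun x : ℝ => (x, x ^ 2, Hfun a h x)) '' (Set.Ici 0))) :
    ∃ Q : Measure ℝ, MomFeasible q.1 q.2.1 Q ∧ SuppAtMost 3 Q ∧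
      q.2.2 ≤ ∫ y, Hfun a h y ∂Q := by
  classical
  set γ : ℝ → ℝ × ℝ × ℝ := fun x => (x, x ^ 2, Hfun a h x) with hγ
  rw [convexHull_eq] at hq
  obtain ⟨ι, t, w, z, hw0, hw1, hzmem, hcm⟩ := hq
  rw [Finset.centerMass_eq_of_sum_1 _ _ hw1] at hcm
  have hq1 : q.1 = ∑ i ∈ t, w i * (z i).1 := by
    rw [← hcm, sum_coord1]
    exact Finset.sum_congr rfl fun i _ => rfl
  have hq2 : q.2.1 = ∑ i ∈ t, w i * (z i).2.1 := by
    rw [← hcm, sum_coord21]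
    exact Finset.sum_congr rfl fun i _ => rfl
  have hq3 : q.2.2 = ∑ i ∈ t, w i * (z i).2.2 := by
    rw [← hcm, sum_coord22]
    exact Finset.sum_congr rfl fun i _ => rfl
  obtain ⟨t', ht'sub, ht'card, w', hw'0, hw'1, he1, he2, hle3⟩ :=
    reduceTo3 z t.card t le_rfl w hw0 hw1
  -- extract the support points
  have hzmem' : ∀ i ∈ t', ∃ y : ℝ, 0 ≤ y ∧ γ y = z i := by
    intro i hi
    obtain ⟨y, hy, hyz⟩ := hzmem i (ht'sub hi)
    exact ⟨y, hy, hyz⟩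
  set x : ι → ℝ := fun i => if hi : i ∈ t' then (hzmem' i hi).choose else 0 with hx
  have hx0 : ∀ i ∈ t', 0 ≤ x i := by
    intro i hi
    rw [hx]; simp only [dif_pos hi]
    exact (hzmem' i hi).choose_spec.1
  have hxz : ∀ i ∈ t', γ (x i) = z i := by
    intro i hi
    rw [hx]; simp only [dif_pos hi]
    exact (hzmem' i hi).choose_spec.2
  obtain ⟨Q, hprob, hIio, hsupp, hint⟩ := finMeasure t' x hx0 w' hw'0 hw'1
  have hHc : Continuous (Hfun a h) := Hfun_continuous hm hbd
  have hid := hint (fun y => y) measurable_id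
  have hsq := hint (fun y => y ^ 2) (measurable_id.pow_const 2)
  have hH := hint (Hfun a h) hHc.measurable
  have hz1 : ∀ i ∈ t', (z i).1 = x i := fun i hi => by rw [← hxz i hi]
  have hz2 : ∀ i ∈ t', (z i).2.1 = (x i) ^ 2 := fun i hi => by rw [← hxz i hi]
  have hz3 : ∀ i ∈ t', (z i).2.2 = Hfun a h (x i) := fun i hi => by rw [← hxz i hi]
  refine ⟨Q, ⟨hprob, hIio, hid.1, hsq.1, ?_, ?_⟩, ?_, ?_⟩
  · rw [hid.2, hq1, ← he1]
    exact Finset.sum_congr rfl fun i hi => by rw [hz1 i hi]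
  · rw [hsq.2, hq2, ← he2]
    exact Finset.sum_congr rfl fun i hi => by rw [hz2 i hi]
  · exact ⟨t'.image x, le_trans (Finset.card_image_le) ht'card, hsupp⟩
  · rw [hH.2, hq3]
    refine le_trans hle3 (le_of_eq ?_)
    exact Finset.sum_congr rfl fun i hi => by rw [hz3 i hi]
lemma tau_mem {a : ℝ} {h : ℝ → ℝ} (m : ℝ × ℝ) (hm1 : 0 < m.1) (hm2 : m.1 ^ 2 < m.2) :
    ((m.1, m.2, (m.1 ^ 2 / m.2) * Hfun a h (m.2 / m.1)) : ℝ × ℝ × ℝ) ∈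
      convexHull ℝ ((fun x : ℝ => (x, x ^ 2, Hfun a h x)) '' Set.Ici 0) := by
  set γ : ℝ → ℝ × ℝ × ℝ := fun x => (x, x ^ 2, Hfun a h x) with hγ
  have hm2pos : 0 < m.2 := lt_of_le_of_lt (sq_nonneg m.1) hm2
  set θ : ℝ := m.1 ^ 2 / m.2 with hθ
  have hθ0 : 0 ≤ θ := div_nonneg (sq_nonneg _) hm2pos.le
  have hθ1 : θ ≤ 1 := (div_le_one hm2pos).mpr hm2.le
  have h1 : γ (m.2 / m.1) ∈ convexHull ℝ (γ '' Set.Ici 0) :=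
    subset_convexHull ℝ _ ⟨m.2 / m.1, div_nonneg hm2pos.le hm1.le, rfl⟩
  have h0 : γ 0 ∈ convexHull ℝ (γ '' Set.Ici 0) :=
    subset_convexHull ℝ _ ⟨0, Set.self_mem_Ici, rfl⟩
  have hmem := (convex_convexHull ℝ (γ '' Set.Ici 0)) h1 h0 (a := θ) (b := 1 - θ) hθ0 (by linarith) (by ring)
  have hcomp : θ • (γ (m.2 / m.1)) + (1 - θ) • (γ 0) =
      ((m.1, m.2, θ * Hfun a h (m.2 / m.1)) : ℝ × ℝ × ℝ) := by
    rw [hγ]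
    simp only [Prod.smul_mk, Prod.mk_add_mk, smul_eq_mul, Hfun_zero, Prod.mk.injEq]
    refine ⟨?_, ?_, by ring⟩
    · rw [hθ]; field_simp
      ring
    · rw [hθ]; field_simp; ring
  rw [hcomp] at hmem
  exact hmem
/-- Theorem 3: `OPT(𝒫⁺)` has the same optimal value as `OPT(𝒫₃⁺)`. -/
theorem OPT_eq_OPT3
    (a β η ν : ℝ) (hβ : 0 < β) (hη : 0 < η) (hν : 0 < ν)
    (h : ℝ → ℝ) (hmeas : Measurable h) (hbd : ∃ M, ∀ x, |h x| ≤ M)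
    (μ σ : ℝ) (hμ : μ = η / ν) (hσ : σ = 2 * β / ν) :
    sSup {z : ℝ | ∃ P : Measure ℝ, MomFeasible μ σ P ∧ z = ν * ∫ x, Hfun a h x ∂P} =
    sSup {z : ℝ | ∃ P : Measure ℝ, MomFeasible μ σ P ∧ SuppAtMost 3 P ∧
      z = ν * ∫ x, Hfun a h x ∂P} := by
  classical
  obtain ⟨M, hM⟩ := hbd
  have hM0 : 0 ≤ M := M_nonneg hM
  have hμpos : 0 < μ := by rw [hμ]; positivity
  set γ : ℝ → ℝ × ℝ × ℝ := fun x => (x, x ^ 2, Hfun a h x) with hγ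
  set Γ : Set (ℝ × ℝ × ℝ) := γ '' Set.Ici 0 with hΓ
  set S1 : Set ℝ := {z : ℝ | ∃ P : Measure ℝ, MomFeasible μ σ P ∧
    z = ν * ∫ x, Hfun a h x ∂P} with hS1
  set S3 : Set ℝ := {z : ℝ | ∃ P : Measure ℝ, MomFeasible μ σ P ∧ SuppAtMost 3 P ∧
    z = ν * ∫ x, Hfun a h x ∂P} with hS3
  have hsub : S3 ⊆ S1 := fun z hz => by
    obtain ⟨P, hP, _, hzv⟩ := hz
    exact ⟨P, hP, hzv⟩
  have hHc : Continuous (Hfun a h) := Hfun_continuous hmeas hM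
  -- integrability of Hfun for feasible measures
  have hHint : ∀ P : Measure ℝ, MomFeasible μ σ P → Integrable (Hfun a h) P := by
    intro P hP
    obtain ⟨hP1, hP2, hP3, hP4, hP5, hP6⟩ := hP
    refine Integrable.mono' (hP4.const_mul M) hHc.aestronglyMeasurable ?_
    exact Eventually.of_forall fun y => by
      rw [Real.norm_eq_abs]; exact Hfun_bound hmeas hM y
  -- upper bound for S1
  have bdd1 : BddAbove S1 := by
    refine ⟨ν * (M * σ), fun z hz => ?_⟩
    obtain ⟨P, hP, rfl⟩ := hz
    obtain ⟨hP1, hP2, hP3, hP4, hP5, hP6⟩ := hP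
    have hint := hHint P ⟨hP1, hP2, hP3, hP4, hP5, hP6⟩
    have h1 : ∫ x, Hfun a h x ∂P ≤ ∫ x, M * x ^ 2 ∂P := by
      refine integral_mono hint (hP4.const_mul M) fun x => ?_
      exact le_trans (le_abs_self _) (Hfun_bound hmeas hM x)
    have h2 : ∫ x, M * x ^ 2 ∂P = M * σ := by rw [integral_const_mul, hP6]
    exact mul_le_mul_of_nonneg_left (h1.trans_eq h2) hν.le
  have bdd3 : BddAbove S3 := bdd1.mono hsub
  rcases Set.eq_empty_or_nonempty S1 with hemp | hne1
  · have : S3 = ∅ := Set.eq_empty_of_subset_empty (hemp ▸ hsub)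
    rw [hemp, this]
  -- S1 nonempty: σ ≥ μ²
  have hvar : ∀ P : Measure ℝ, MomFeasible μ σ P →
      (Integrable (fun x => (x - μ) ^ 2) P ∧ ∫ x, (x - μ) ^ 2 ∂P = σ - μ ^ 2) := by
    intro P hP
    obtain ⟨hP1, hP2, hP3, hP4, hP5, hP6⟩ := hP
    have hfeq : (fun x : ℝ => (x - μ) ^ 2) = fun x => x ^ 2 - (2 * μ) * x + μ ^ 2 := by
      funext x; ring
    have hint1 : Integrable (fun x => x ^ 2 - 2 * μ * x) P :=
      hP4.sub (hP3.const_mul (2 * μ))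
    have hint : Integrable (fun x => (x - μ) ^ 2) P := by
      rw [hfeq]
      exact hint1.add (integrable_const _)
    refine ⟨hint, ?_⟩
    rw [hfeq]
    rw [integral_add hint1 (integrable_const _),
      integral_sub hP4 (hP3.const_mul (2 * μ)), integral_const_mul, hP5, hP6,
      integral_const, probReal_univ, smul_eq_mul, one_mul]
    ring
  have hσμ : μ ^ 2 ≤ σ := by
    obtain ⟨z₀, P₀, hP₀, -⟩ := hne1
    have := hvar P₀ hP₀
    have hnn : 0 ≤ ∫ x, (x - μ) ^ 2 ∂P₀ := integral_nonneg fun x => sq_nonneg _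
    linarith [this.2 ▸ hnn]
  have hσpos : 0 < σ := lt_of_lt_of_le (by positivity) hσμ
  -- key step : every value in S1 is at most sSup S3
  have key : ∀ z ∈ S1, z ≤ sSup S3 := by
    intro z hz
    obtain ⟨P, hP, rfl⟩ := hz
    obtain ⟨hP1, hP2, hP3, hP4, hP5, hP6⟩ := hP
    have hPfeas : MomFeasible μ σ P := ⟨hP1, hP2, hP3, hP4, hP5, hP6⟩
    have hint := hHint P hPfeas
    rcases eq_or_lt_of_le hσμ with hcase | hcase
    · -- degenerate case: σ = μ², P is a.e. the point μ
      have hvar' := hvar P hPfeas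
      have hzero : ∫ x, (x - μ) ^ 2 ∂P = 0 := by rw [hvar'.2, ← hcase]; ring
      have hae : ∀ᵐ x ∂P, (x - μ) ^ 2 = 0 := by
        have := (integral_eq_zero_iff_of_nonneg (fun x => sq_nonneg (x - μ)) hvar'.1).mp hzero
        filter_upwards [this] with x hx using hx
      have haeμ : ∀ᵐ x ∂P, x = μ := by
        filter_upwards [hae] with x hx
        have := pow_eq_zero_iff (n := 2) (by norm_num) |>.mp hx
        linarith [sub_eq_zero.mp this]
      have hHμ : ∫ x, Hfun a h x ∂P = Hfun a h μ := by
        have : ∀ᵐ x ∂P, Hfun a h x = Hfun a h μ := by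
          filter_upwards [haeμ] with x hx; rw [hx]
        rw [integral_congr_ae this, integral_const, probReal_univ,
          one_smul]
      -- the Dirac point via hull_to_point applied to γ μ
      have hqmem : γ μ ∈ convexHull ℝ Γ :=
        subset_convexHull ℝ Γ ⟨μ, hμpos.le, rfl⟩
      obtain ⟨Q, hQfeas, hQsupp, hQval⟩ := hull_to_point hmeas hM (γ μ) hqmem
      have hQfeas' : MomFeasible μ σ Q := by
        have : (γ μ).1 = μ := rfl
        have h2 : (γ μ).2.1 = μ ^ 2 := rfl
        rw [hγ] at hQfeas
        simpa [← hcase] using hQfeas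
      have hmem3 : ν * ∫ x, Hfun a h x ∂Q ∈ S3 := ⟨Q, hQfeas', hQsupp, rfl⟩
      refine le_trans ?_ (le_csSup bdd3 hmem3)
      rw [hHμ]
      exact mul_le_mul_of_nonneg_left hQval hν.le
    ·
      -- main case: μ² < σ
      set tstar : ℝ := ∫ x, Hfun a h x ∂P with htstar
      have hγint : Integrable γ P := by
        rw [hγ]
        exact hP3.prodMk (hP4.prodMk hint)
      have hγae : ∀ᵐ x ∂P, γ x ∈ closure (convexHull ℝ Γ) := by
        have hae0 : ∀ᵐ x ∂P, 0 ≤ x := by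
          rw [ae_iff]
          convert hP2 using 2
          ext x; simp [not_le]
        filter_upwards [hae0] with x hx
        exact subset_closure (subset_convexHull ℝ Γ ⟨x, hx, rfl⟩)
      have hpstar : ((μ, σ, tstar) : ℝ × ℝ × ℝ) ∈ closure (convexHull ℝ Γ) := by
        have hmem := (convex_convexHull ℝ Γ).closure.integral_mem isClosed_closure hγae hγint
        have hcalc : ∫ x, γ x ∂P = ((μ, σ, tstar) : ℝ × ℝ × ℝ) := by
          rw [hγ]
          rw [integral_pair hP3 (hP4.prodMk hint), integral_pair hP4 hint, hP5, hP6]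
        rw [← hcalc]
        exact hmem
      have hUopen : IsOpen {m : ℝ × ℝ | 0 < m.1 ∧ m.1 ^ 2 < m.2} :=
        (isOpen_lt continuous_const continuous_fst).inter
          (isOpen_lt (continuous_fst.pow 2) continuous_snd)
      have hmemU : ((μ, σ) : ℝ × ℝ) ∈ {m : ℝ × ℝ | 0 < m.1 ∧ m.1 ^ 2 < m.2} :=
        ⟨hμpos, hcase⟩
      obtain ⟨ε, hε, hball⟩ := Metric.isOpen_iff.mp hUopen _ hmemU
      set r : ℝ := min (ε / 2) (μ / 2) with hr
      have hrpos : 0 < r := lt_min (by linarith) (by linarith)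
      have hrball : ∀ m : ℝ × ℝ, dist m (μ, σ) ≤ r → (0 < m.1 ∧ m.1 ^ 2 < m.2) := by
        intro m hm
        exact hball (lt_of_le_of_lt hm (lt_of_le_of_lt (min_le_left _ _) (by linarith)))
      have hcoordb : ∀ m : ℝ × ℝ, dist m (μ, σ) ≤ r → (μ / 2 ≤ m.1 ∧ m.2 ≤ σ + r) := by
        intro m hm
        rw [Prod.dist_eq] at hm
        have h1 : dist m.1 μ ≤ r := le_trans (le_max_left _ _) hm
        have h2 : dist m.2 σ ≤ r := le_trans (le_max_right _ _) hm
        rw [Real.dist_eq] at h1 h2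
        have hrμ : r ≤ μ / 2 := min_le_right _ _
        constructor
        · have := abs_le.mp h1
          linarith [this.1]
        · have := abs_le.mp h2
          linarith [this.2]
      set C : ℝ := M * ((σ + r) / (μ / 2)) ^ 2 with hC
      set τf : ℝ × ℝ → ℝ := fun m => (m.1 ^ 2 / m.2) * Hfun a h (m.2 / m.1) with hτf
      have hτbound : ∀ m : ℝ × ℝ, dist m (μ, σ) ≤ r → |τf m| ≤ C := by
        intro m hm
        obtain ⟨hm1, hm2⟩ := hrball m hm
        obtain ⟨hmb1, hmb2⟩ := hcoordb m hm
        have hm2pos : 0 < m.2 := lt_of_le_of_lt (sq_nonneg _) hm2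
        rw [hτf, abs_mul]
        have hθ : |m.1 ^ 2 / m.2| ≤ 1 := by
          rw [abs_of_nonneg (div_nonneg (sq_nonneg _) hm2pos.le)]
          exact (div_le_one hm2pos).mpr hm2.le
        have hynn : 0 ≤ m.2 / m.1 := div_nonneg hm2pos.le hm1.le
        have hyb : m.2 / m.1 ≤ (σ + r) / (μ / 2) :=
          div_le_div₀ (by linarith [hrpos]) hmb2 (by linarith) hmb1
        have hHb := Hfun_bound (a := a) hmeas hM (m.2 / m.1)
        calc |m.1 ^ 2 / m.2| * |Hfun a h (m.2 / m.1)|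
            ≤ 1 * (M * (m.2 / m.1) ^ 2) :=
              mul_le_mul hθ hHb (abs_nonneg _) zero_le_one
          _ = M * (m.2 / m.1) ^ 2 := one_mul _
          _ ≤ C := by
              rw [hC]
              exact mul_le_mul_of_nonneg_left (pow_le_pow_left₀ hynn hyb 2) hM0
      obtain ⟨p, hpmem, hptend⟩ := mem_closure_iff_seq_limit.mp hpstar
      set d : ℕ → ℝ := fun n => dist (p n) ((μ, σ, tstar) : ℝ × ℝ × ℝ) with hd
      set δ : ℕ → ℝ := fun n => d n / (r + d n) with hδ
      set mn : ℕ → ℝ × ℝ := fun n => ((p n).1, (p n).2.1) with hmn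
      set cn : ℕ → ℝ × ℝ :=
        fun n => ((μ, σ) : ℝ × ℝ) + ((1 - δ n) / δ n) • (((μ, σ) : ℝ × ℝ) - mn n) with hcn
      have hdnn : ∀ n, 0 ≤ d n := fun n => dist_nonneg
      have hrd : ∀ n, 0 < r + d n := fun n => by linarith [hdnn n, hrpos]
      have hδ0 : ∀ n, 0 ≤ δ n := fun n => div_nonneg (hdnn n) (hrd n).le
      have hδ1 : ∀ n, δ n < 1 := fun n => by
        rw [hδ]
        rw [div_lt_one (hrd n)]
        linarith [hrpos]
      have hdcomp : ∀ n, dist (p n).1 μ ≤ d n ∧ dist (p n).2.1 σ ≤ d n ∧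
          dist (p n).2.2 tstar ≤ d n := by
        intro n
        have e1 : d n = max (dist (p n).1 μ) (dist (p n).2 ((σ, tstar) : ℝ × ℝ)) :=
          Prod.dist_eq
        have e2 : dist (p n).2 ((σ, tstar) : ℝ × ℝ)
            = max (dist (p n).2.1 σ) (dist (p n).2.2 tstar) := Prod.dist_eq
        refine ⟨?_, ?_, ?_⟩
        · rw [e1]; exact le_max_left _ _
        · rw [e1]; exact le_trans (by rw [e2]; exact le_max_left _ _) (le_max_right _ _)
        · rw [e1]; exact le_trans (by rw [e2]; exact le_max_right _ _) (le_max_right _ _)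
      have hemd : ∀ n, dist (mn n) ((μ, σ) : ℝ × ℝ) ≤ d n := by
        intro n
        rw [hmn, Prod.dist_eq]
        exact max_le (hdcomp n).1 (hdcomp n).2.1
      have hδzero : ∀ n, d n = 0 → δ n = 0 := by
        intro n h0
        rw [hδ]; simp [h0]
      have hcball : ∀ n, dist (cn n) ((μ, σ) : ℝ × ℝ) ≤ r := by
        intro n
        rcases eq_or_lt_of_le (hdnn n) with h0 | hpos
        · have hpn : p n = ((μ, σ, tstar) : ℝ × ℝ × ℝ) := dist_eq_zero.mp h0.symm
          have hmnn : mn n = ((μ, σ) : ℝ × ℝ) := by simp [hmn, hpn]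
          simp [hcn, hmnn, hrpos.le]
        · have h1δ : (1 - δ n) / δ n = r / d n := by
            rw [hδ]
            field_simp
            ring
          have hnorm : dist (cn n) ((μ, σ) : ℝ × ℝ)
              = |(1 - δ n) / δ n| * dist (mn n) ((μ, σ) : ℝ × ℝ) := by
            rw [hcn, dist_eq_norm, add_sub_cancel_left, norm_smul, Real.norm_eq_abs,
              dist_eq_norm, norm_sub_rev]
          rw [hnorm, h1δ, abs_of_nonneg (div_nonneg hrpos.le (hdnn n))]
          calc r / d n * dist (mn n) ((μ, σ) : ℝ × ℝ) ≤ r / d n * d n := by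
                refine mul_le_mul_of_nonneg_left (hemd n) (div_nonneg hrpos.le (hdnn n))
            _ = r := by field_simp
      have hcmem : ∀ n, 0 < (cn n).1 ∧ (cn n).1 ^ 2 < (cn n).2 :=
        fun n => hrball _ (hcball n)
      have hτmem : ∀ n, (((cn n).1, (cn n).2, τf (cn n)) : ℝ × ℝ × ℝ) ∈ convexHull ℝ Γ :=
        fun n => by
          rw [hτf]
          exact tau_mem (a := a) (h := h) (cn n) (hcmem n).1 (hcmem n).2
      have hcn1 : ∀ n, (cn n).1 = μ + (1 - δ n) / δ n * (μ - (p n).1) := by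
        intro n; rw [hcn, hmn]; simp [Prod.smul_fst]
      have hcn2 : ∀ n, (cn n).2 = σ + (1 - δ n) / δ n * (σ - (p n).2.1) := by
        intro n; rw [hcn, hmn]; simp [Prod.smul_snd]
      have hmix : ∀ n, ((1 - δ n) • p n + δ n • (((cn n).1, (cn n).2, τf (cn n)) : ℝ × ℝ × ℝ))
          = ((μ, σ, (1 - δ n) * (p n).2.2 + δ n * τf (cn n)) : ℝ × ℝ × ℝ) := by
        intro n
        have hc1 : (1 - δ n) * (p n).1 + δ n * (cn n).1 = μ := by
          rcases eq_or_ne (δ n) 0 with h0 | h0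
          · have hd0 : d n = 0 := by
              by_contra hne
              have hpos : 0 < d n := lt_of_le_of_ne (hdnn n) (Ne.symm hne)
              have : 0 < δ n := div_pos hpos (hrd n)
              exact absurd h0 (ne_of_gt this)
            have hpn : p n = ((μ, σ, tstar) : ℝ × ℝ × ℝ) := dist_eq_zero.mp hd0
            simp [h0, hpn]
          · rw [hcn1 n]
            field_simp
            ring
        have hc2 : (1 - δ n) * (p n).2.1 + δ n * (cn n).2 = σ := by
          rcases eq_or_ne (δ n) 0 with h0 | h0
          · have hd0 : d n = 0 := by
              by_contra hne
              have hpos : 0 < d n := lt_of_le_of_ne (hdnn n) (Ne.symm hne)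
              have : 0 < δ n := div_pos hpos (hrd n)
              exact absurd h0 (ne_of_gt this)
            have hpn : p n = ((μ, σ, tstar) : ℝ × ℝ × ℝ) := dist_eq_zero.mp hd0
            simp [h0, hpn]
          · rw [hcn2 n]
            field_simp
            ring
        refine Prod.ext ?_ (Prod.ext ?_ ?_)
        · simpa [Prod.fst_add, Prod.smul_fst] using hc1
        · simpa [Prod.snd_add, Prod.smul_snd, Prod.fst_add, Prod.smul_fst] using hc2
        · simp [Prod.snd_add, Prod.smul_snd]
      have hvmem : ∀ n, ((μ, σ, (1 - δ n) * (p n).2.2 + δ n * τf (cn n)) : ℝ × ℝ × ℝ)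
          ∈ convexHull ℝ Γ := by
        intro n
        rw [← hmix n]
        exact (convex_convexHull ℝ Γ) (hpmem n) (hτmem n)
          (by linarith [hδ1 n]) (hδ0 n) (by ring)
      have hS3el : ∀ n, ν * ((1 - δ n) * (p n).2.2 + δ n * τf (cn n)) ≤ sSup S3 := by
        intro n
        obtain ⟨Q, hQfeas, hQsupp, hQval⟩ := hull_to_point hmeas hM _ (hvmem n)
        exact le_trans (mul_le_mul_of_nonneg_left hQval hν.le)
          (le_csSup bdd3 ⟨Q, hQfeas, hQsupp, rfl⟩)
      have hdt : Tendsto d atTop (𝓝 0) := by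
        have := hptend.dist
          (tendsto_const_nhds : Tendsto (fun _ : ℕ => ((μ, σ, tstar) : ℝ × ℝ × ℝ)) atTop _)
        simpa [hd] using this
      have hδt : Tendsto δ atTop (𝓝 0) := by
        have h1 : Tendsto (fun n => r + d n) atTop (𝓝 (r + 0)) := tendsto_const_nhds.add hdt
        have h2 := hdt.div h1 (by rw [add_zero]; exact hrpos.ne')
        rw [zero_div] at h2; exact h2
      have htt : Tendsto (fun n => (p n).2.2) atTop (𝓝 tstar) := by
        have hcont : Continuous (fun q : ℝ × ℝ × ℝ => q.2.2) :=
          continuous_snd.comp continuous_snd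
        exact (hcont.tendsto _).comp hptend
      have hrem : Tendsto (fun n => δ n * (τf (cn n) - (p n).2.2)) atTop (𝓝 0) := by
        have hgt : Tendsto (fun n => δ n * (C + |tstar| + d n)) atTop (𝓝 0) := by
          have h5 : Tendsto (fun n => δ n * (C + |tstar| + d n)) atTop
              (𝓝 (0 * (C + |tstar| + 0))) := hδt.mul (tendsto_const_nhds.add hdt)
          simpa using h5
        refine squeeze_zero_norm (fun n => ?_) hgt
        · rw [Real.norm_eq_abs, abs_mul, abs_of_nonneg (hδ0 n)]
          refine mul_le_mul_of_nonneg_left ?_ (hδ0 n)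
          have h1 : |τf (cn n)| ≤ C := hτbound _ (hcball n)
          have h2 : |(p n).2.2 - tstar| ≤ d n := by
            have := (hdcomp n).2.2
            rwa [Real.dist_eq] at this
          have h3 : |τf (cn n) - (p n).2.2| ≤ |τf (cn n)| + |(p n).2.2| := by
            rw [sub_eq_add_neg]
            refine le_trans (abs_add_le _ _) ?_
            rw [abs_neg]
          have h4 : |(p n).2.2| ≤ |tstar| + d n := by
            have : |(p n).2.2| - |tstar| ≤ |(p n).2.2 - tstar| := abs_sub_abs_le_abs_sub _ _
            linarith
          linarith
      have hvt : Tendsto (fun n => ν * ((1 - δ n) * (p n).2.2 + δ n * τf (cn n))) atTop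
          (𝓝 (ν * tstar)) := by
        have h1 : ∀ n, (p n).2.2 + δ n * (τf (cn n) - (p n).2.2)
            = (1 - δ n) * (p n).2.2 + δ n * τf (cn n) := fun n => by ring
        have h2 : Tendsto (fun n => (p n).2.2 + δ n * (τf (cn n) - (p n).2.2)) atTop
            (𝓝 (tstar + 0)) := htt.add hrem
        have h3 := (h2.congr h1).const_mul ν
        simpa using h3
      exact le_of_tendsto hvt (Eventually.of_forall hS3el)

  refine le_antisymm (csSup_le hne1 key) (csSup_le_csSup bdd1 ?_ hsub)
  -- S3 is nonempty
  · have hqmem : ((μ, σ, (μ ^ 2 / σ) * Hfun a h (σ / μ)) : ℝ × ℝ × ℝ) ∈ convexHull ℝ Γ := by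
      rcases eq_or_lt_of_le hσμ with hcase | hcase
      · have hσμ' : σ / μ = μ := by rw [← hcase]; field_simp
        have : (μ ^ 2 / σ) = 1 := by rw [← hcase]; field_simp
        rw [this, hσμ', one_mul]
        exact subset_convexHull ℝ Γ ⟨μ, hμpos.le, by rw [hγ, ← hcase]⟩
      · exact tau_mem (a := a) (h := h) (μ, σ) hμpos hcase
    obtain ⟨Q, hQfeas, hQsupp, -⟩ := hull_to_point hmeas hM _ hqmem
    exact ⟨ν * ∫ x, Hfun a h x ∂Q, Q, hQfeas, hQsupp, rfl⟩
end

section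
/- Let a ∈ ℝ, β, η, ν > 0, and let h : ℝ → ℝ be bounded and measurable. Suppose the limit λ = lim_{x→∞} H(x)/x² exists and is finite, H is convex on [0, ∞), its derivative H′ is convex on (0, c) and concave on (c, ∞) for some 0 ≤ c ≤ ∞, and σ > μ². Then the optimal value of OPT(𝒫₂⁺) equals max_{x₁ ∈ [0, μ]} W(x₁); moreover, if no optimal solution of OPT(𝒫₂⁺) exists, then this optimal value equals ν(H(μ) + λ(σ − μ²)), and there is a sequence of feasible two-point measures P⁽ᵏ⁾ = p₁⁽ᵏ⁾δ(x₁⁽ᵏ⁾) + p₂⁽ᵏ⁾δ(x₂⁽ᵏ⁾) with objective values converging to the optimal value and (x₁⁽ᵏ⁾, x₂⁽ᵏ⁾, p₁⁽ᵏ⁾, p₂⁽ᵏ⁾) → (μ, ∞, 1, 0). -/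
open MeasureTheory Set Filter Topology

/-- The two-point measure `p₁ δ(x₁) + p₂ δ(x₂)`. -/
noncomputable def twoPoint (x₁ x₂ p₁ p₂ : ℝ) : Measure ℝ :=
  ENNReal.ofReal p₁ • Measure.dirac x₁ + ENNReal.ofReal p₂ • Measure.dirac x₂

/-- The line-search objective `W(x₁)` (with `W(μ) = ν(H(μ) + λ(σ − μ²))`). -/
noncomputable def Wfun (a ν μ σ lam : ℝ) (h : ℝ → ℝ) (x₁ : ℝ) : ℝ :=
  if x₁ = μ then ν * (Hfun a h μ + lam * (σ - μ ^ 2))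
  else ν * ((σ - μ ^ 2) / (σ - 2 * μ * x₁ + x₁ ^ 2) * Hfun a h x₁ +
    (μ - x₁) ^ 2 / (σ - 2 * μ * x₁ + x₁ ^ 2) * Hfun a h ((σ - μ * x₁) / (μ - x₁)))

lemma Hcont {a : ℝ} {h : ℝ → ℝ} (hmeas : Measurable h) (hbd : ∃ M, ∀ x, |h x| ≤ M) :
    Continuous (Hfun a h) := by
  obtain ⟨M, hM⟩ := hbd
  have hint : ∀ p q : ℝ, IntervalIntegrable (fun v => h (v + a)) volume p q := by
    intro p q
    rw [intervalIntegrable_iff]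
    apply Measure.integrableOn_of_bounded (M := M) ((measure_Ioc_lt_top).ne)
      ((hmeas.comp (measurable_add_const a)).aestronglyMeasurable)
    exact Eventually.of_forall fun v => by simpa using hM (v + a)
  have gcont : Continuous fun u => ∫ v in (0:ℝ)..u, h (v + a) :=
    intervalIntegral.continuous_primitive hint 0
  exact intervalIntegral.continuous_primitive
    (fun p q => gcont.intervalIntegrable p q) 0

lemma integrable_dirac' (f : ℝ → ℝ) (x : ℝ) : Integrable f (Measure.dirac x) := by
  have : f =ᵐ[Measure.dirac x] fun _ => f x := by
    rw [Filter.eventuallyEq_iff_exists_mem]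
    exact ⟨{x}, by simp [MeasureTheory.ae_dirac_eq], fun y hy => by simp at hy; rw [hy]⟩
  exact (integrable_const (f x)).congr this.symm

lemma integrable_twoPoint (f : ℝ → ℝ) (x₁ x₂ p₁ p₂ : ℝ) :
    Integrable f (twoPoint x₁ x₂ p₁ p₂) := by
  unfold twoPoint
  exact Integrable.add_measure
    ((integrable_dirac' f x₁).smul_measure ENNReal.ofReal_ne_top)
    ((integrable_dirac' f x₂).smul_measure ENNReal.ofReal_ne_top)

lemma integral_twoPoint (f : ℝ → ℝ) (x₁ x₂ p₁ p₂ : ℝ) (hp₁ : 0 ≤ p₁) (hp₂ : 0 ≤ p₂) :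
    ∫ x, f x ∂(twoPoint x₁ x₂ p₁ p₂) = p₁ * f x₁ + p₂ * f x₂ := by
  unfold twoPoint
  rw [integral_add_measure
    ((integrable_dirac' f x₁).smul_measure ENNReal.ofReal_ne_top)
    ((integrable_dirac' f x₂).smul_measure ENNReal.ofReal_ne_top),
    integral_smul_measure, integral_smul_measure, integral_dirac, integral_dirac,
    ENNReal.toReal_ofReal hp₁, ENNReal.toReal_ofReal hp₂]
  simp [smul_eq_mul]

lemma feasible_twoPoint {μ σ x₁ x₂ p₁ p₂ : ℝ}
    (hx₁ : 0 ≤ x₁) (hx₂ : 0 ≤ x₂) (hp₁ : 0 ≤ p₁) (hp₂ : 0 ≤ p₂)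
    (hsum : p₁ + p₂ = 1) (hm1 : p₁ * x₁ + p₂ * x₂ = μ)
    (hm2 : p₁ * x₁ ^ 2 + p₂ * x₂ ^ 2 = σ) :
    MomFeasible μ σ (twoPoint x₁ x₂ p₁ p₂) ∧ SuppAtMost 2 (twoPoint x₁ x₂ p₁ p₂) := by
  have hIio : twoPoint x₁ x₂ p₁ p₂ (Set.Iio 0) = 0 := by
    unfold twoPoint
    simp only [Measure.add_apply, Measure.smul_apply, smul_eq_mul]
    rw [Measure.dirac_apply' _ measurableSet_Iio, Measure.dirac_apply' _ measurableSet_Iio]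
    rw [Set.indicator_of_notMem (by simpa using hx₁), Set.indicator_of_notMem (by simpa using hx₂)]
    simp
  refine ⟨⟨⟨?_⟩, hIio, integrable_twoPoint _ _ _ _ _, integrable_twoPoint _ _ _ _ _, ?_, ?_⟩, ?_⟩
  · unfold twoPoint
    simp only [Measure.add_apply, Measure.smul_apply, smul_eq_mul]
    rw [Measure.dirac_apply' _ MeasurableSet.univ, Measure.dirac_apply' _ MeasurableSet.univ]
    simp only [Set.indicator_of_mem (Set.mem_univ _), Pi.one_apply, mul_one]
    rw [← ENNReal.ofReal_add hp₁ hp₂, hsum, ENNReal.ofReal_one]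
  · rw [integral_twoPoint _ _ _ _ _ hp₁ hp₂]; exact hm1
  · rw [integral_twoPoint _ _ _ _ _ hp₁ hp₂]; exact hm2
  · refine ⟨{x₁, x₂}, Finset.card_insert_le _ _ |>.trans (by simp), ?_⟩
    unfold twoPoint
    simp only [Measure.add_apply, Measure.smul_apply, smul_eq_mul]
    have hmeas : MeasurableSet (({x₁, x₂} : Finset ℝ) : Set ℝ)ᶜ :=
      (Finset.measurableSet _).compl
    rw [Measure.dirac_apply' _ hmeas, Measure.dirac_apply' _ hmeas]
    rw [Set.indicator_of_notMem (by simp), Set.indicator_of_notMem (by simp)]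
    simp

lemma integral_suppFin (P : Measure ℝ) [IsProbabilityMeasure P] (s : Finset ℝ)
    (hs : P ((s : Set ℝ)ᶜ) = 0) (f : ℝ → ℝ) (hf : Continuous f) :
    ∫ x, f x ∂P = ∑ x ∈ s, (P {x}).toReal * f x := by
  have hae : ∀ᵐ x ∂P, x ∈ (s : Set ℝ) := by
    rw [ae_iff]; simpa [Set.compl_def] using hs
  have hrs : P.restrict (s : Set ℝ) = P := Measure.restrict_eq_self_of_ae_mem hae
  have hint : IntegrableOn f (s : Set ℝ) P := by
    apply Measure.integrableOn_of_bounded (M := ∑ x ∈ s, |f x|) (measure_ne_top _ _)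
      hf.aestronglyMeasurable
    filter_upwards [ae_restrict_mem (Finset.measurableSet s)] with x hx
    simp only [Real.norm_eq_abs]
    exact Finset.single_le_sum (f := fun y => |f y|) (fun y _ => abs_nonneg _) hx
  calc ∫ x, f x ∂P = ∫ x in (s : Set ℝ), f x ∂P := by rw [hrs]
    _ = ∑ x ∈ s, (P {x}).toReal * f x := by
        rw [integral_finset s hint]; simp [smul_eq_mul, measureReal_def]

lemma key_algebra (a ν lam : ℝ) (h : ℝ → ℝ) {μ σ u v p q : ℝ}
    (hσμ : μ ^ 2 < σ) (hu0 : 0 ≤ u) (huv : u < v) (hp : 0 < p) (hq : 0 < q)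
    (e1 : p + q = 1) (e2 : p * u + q * v = μ) (e3 : p * u ^ 2 + q * v ^ 2 = σ) :
    0 ≤ u ∧ u < μ ∧
      ν * (p * Hfun a h u + q * Hfun a h v) = Wfun a ν μ σ lam h u := by
  have hq1 : q = 1 - p := by linarith
  subst hq1
  subst e2; subst e3
  have huμ : u < p * u + (1 - p) * v := by nlinarith
  set μ := p * u + (1 - p) * v with hμdef
  set σ := p * u ^ 2 + (1 - p) * v ^ 2 with hσdef
  have hD : σ - 2 * μ * u + u ^ 2 = (1 - p) * (v - u) ^ 2 := by
    rw [hμdef, hσdef]; ring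
  have hDpos : 0 < σ - 2 * μ * u + u ^ 2 := by
    rw [hD]; exact mul_pos hq (pow_pos (sub_pos.2 huv) 2)
  refine ⟨hu0, huμ, ?_⟩
  rw [Wfun, if_neg (ne_of_lt huμ)]
  have hx2 : (σ - μ * u) / (μ - u) = v := by
    rw [div_eq_iff (by linarith : μ - u ≠ 0), hμdef, hσdef]; ring
  have hc1 : (σ - μ ^ 2) / (σ - 2 * μ * u + u ^ 2) = p := by
    rw [div_eq_iff hDpos.ne', hD, hμdef, hσdef]; ring
  have hc2 : (μ - u) ^ 2 / (σ - 2 * μ * u + u ^ 2) = 1 - p := by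
    rw [div_eq_iff hDpos.ne', hD, hμdef]; ring
  rw [hx2, hc1, hc2]

lemma characterization (a ν lam : ℝ) {h : ℝ → ℝ} (hHc : Continuous (Hfun a h))
    {μ σ : ℝ} (hσμ : μ ^ 2 < σ) (P : Measure ℝ)
    (hF : MomFeasible μ σ P) (hS : SuppAtMost 2 P) :
    ∃ x₁ ∈ Set.Ico 0 μ, ν * ∫ x, Hfun a h x ∂P = Wfun a ν μ σ lam h x₁ := by
  obtain ⟨hprob, hIio, _, _, hm1, hm2⟩ := hF
  obtain ⟨s, hcard, hs⟩ := hS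
  haveI := hprob
  have hsum1 : ∑ x ∈ s, (P {x}).toReal * 1 = 1 := by
    rw [← integral_suppFin P s hs (fun _ => 1) continuous_const]; simp
  have hsum2 : ∑ x ∈ s, (P {x}).toReal * x = μ := by
    rw [← integral_suppFin P s hs (fun x => x) continuous_id]; exact hm1
  have hsum3 : ∑ x ∈ s, (P {x}).toReal * x ^ 2 = σ := by
    rw [← integral_suppFin P s hs (fun x => x ^ 2) (continuous_pow 2)]; exact hm2
  have hsumH : ∫ x, Hfun a h x ∂P = ∑ x ∈ s, (P {x}).toReal * Hfun a h x :=
    integral_suppFin P s hs _ hHc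
  have hpos : ∀ x : ℝ, 0 < (P {x}).toReal → 0 ≤ x := by
    intro x hx
    by_contra hneg
    have : P {x} ≤ P (Set.Iio 0) :=
      measure_mono (Set.singleton_subset_iff.2 (by simpa using lt_of_not_ge hneg))
    rw [hIio] at this
    simp [le_zero_iff.mp this] at hx
  interval_cases hc : s.card
  · rw [Finset.card_eq_zero] at hc; subst hc; simp at hsum1
  · obtain ⟨u, rfl⟩ := Finset.card_eq_one.mp hc
    simp only [Finset.sum_singleton, mul_one] at hsum1 hsum2 hsum3
    rw [hsum1, one_mul] at hsum2 hsum3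
    subst hsum2; linarith
  · obtain ⟨u, v, huv, rfl⟩ := Finset.card_eq_two.mp hc
    have hmem : u ∉ ({v} : Finset ℝ) := by simpa using huv
    rw [Finset.sum_insert hmem, Finset.sum_singleton] at hsum1 hsum2 hsum3 hsumH
    set p := (P {u}).toReal with hpdef
    set q := (P {v}).toReal with hqdef
    rw [mul_one, mul_one] at hsum1
    have hp0 : 0 ≤ p := ENNReal.toReal_nonneg
    have hq0 : 0 ≤ q := ENNReal.toReal_nonneg
    have key_id : σ - μ ^ 2 = p * q * (v - u) ^ 2 := by
      linear_combination (p * u + q * v + μ) * hsum2 - (p * u ^ 2 + q * v ^ 2) * hsum1 - hsum3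
    have hpq : 0 < p * q := by
      rcases eq_or_lt_of_le (mul_nonneg hp0 hq0) with hz | hz
      · nlinarith
      · exact hz
    have hp : 0 < p := by nlinarith
    have hq : 0 < q := by nlinarith
    have hu0 : 0 ≤ u := hpos u hp
    have hv0 : 0 ≤ v := hpos v hq
    rcases lt_or_gt_of_ne huv with hlt | hlt
    · obtain ⟨h1, h2, h3⟩ := key_algebra a ν lam h hσμ hu0 hlt hp hq hsum1 hsum2 hsum3
      exact ⟨u, ⟨h1, h2⟩, by rw [hsumH]; exact h3⟩
    · obtain ⟨h1, h2, h3⟩ := key_algebra a ν lam h hσμ hv0 hlt hq hp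
        (by linarith) (by linarith) (by linarith)
      exact ⟨v, ⟨h1, h2⟩, by rw [hsumH]; rw [← h3]; ring_nf⟩

lemma construction (a ν lam : ℝ) (h : ℝ → ℝ) {μ σ x : ℝ}
    (hσμ : μ ^ 2 < σ) (hμpos : 0 < μ) (hx : x ∈ Set.Ico (0:ℝ) μ) :
    0 ≤ (σ - μ ^ 2) / (σ - 2 * μ * x + x ^ 2) ∧
    0 ≤ (μ - x) ^ 2 / (σ - 2 * μ * x + x ^ 2) ∧
    0 ≤ x ∧ μ < (σ - μ * x) / (μ - x) ∧
    (σ - μ ^ 2) / (σ - 2 * μ * x + x ^ 2) + (μ - x) ^ 2 / (σ - 2 * μ * x + x ^ 2) = 1 ∧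
    (σ - μ ^ 2) / (σ - 2 * μ * x + x ^ 2) * x +
      (μ - x) ^ 2 / (σ - 2 * μ * x + x ^ 2) * ((σ - μ * x) / (μ - x)) = μ ∧
    (σ - μ ^ 2) / (σ - 2 * μ * x + x ^ 2) * x ^ 2 +
      (μ - x) ^ 2 / (σ - 2 * μ * x + x ^ 2) * ((σ - μ * x) / (μ - x)) ^ 2 = σ ∧
    Wfun a ν μ σ lam h x =
      ν * ((σ - μ ^ 2) / (σ - 2 * μ * x + x ^ 2) * Hfun a h x +
        (μ - x) ^ 2 / (σ - 2 * μ * x + x ^ 2) * Hfun a h ((σ - μ * x) / (μ - x))) := by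
  obtain ⟨hx0, hxμ⟩ := hx
  have hμx : 0 < μ - x := by linarith
  have hDpos : 0 < σ - 2 * μ * x + x ^ 2 := by nlinarith
  refine ⟨div_nonneg (by linarith) hDpos.le, div_nonneg (sq_nonneg _) hDpos.le, hx0, ?_, ?_, ?_, ?_, ?_⟩
  · rw [lt_div_iff₀ hμx]; nlinarith
  · field_simp; rw [div_eq_iff (by nlinarith)]; ring
  · field_simp; rw [div_eq_iff (by nlinarith)]; ring
  · field_simp; rw [div_eq_iff (by nlinarith)]; ring
  · rw [Wfun, if_neg (ne_of_lt hxμ)]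

lemma tendsto_x2_atTop {μ σ : ℝ} (hσμ : μ ^ 2 < σ) :
    Tendsto (fun x => (σ - μ * x) / (μ - x)) (𝓝[Set.Ico (0:ℝ) μ] μ) atTop := by
  have h1 : Tendsto (fun x : ℝ => σ - μ * x) (𝓝[Set.Ico (0:ℝ) μ] μ) (𝓝 (σ - μ * μ)) :=
    ((continuous_const.sub (continuous_const.mul continuous_id)).tendsto μ).mono_left
      nhdsWithin_le_nhds
  have h2 : Tendsto (fun x : ℝ => (μ - x)⁻¹) (𝓝[Set.Ico (0:ℝ) μ] μ) atTop := by
    apply tendsto_inv_nhdsGT_zero.comp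
    rw [tendsto_nhdsWithin_iff]
    constructor
    · have hc : Continuous fun x : ℝ => μ - x := by continuity
      have := (hc.tendsto μ).mono_left (nhdsWithin_le_nhds (s := Set.Ico (0:ℝ) μ))
      simpa using this
    · filter_upwards [self_mem_nhdsWithin] with x hx
      simp [Set.mem_Ioi, sub_pos, hx.2]
  have := Filter.Tendsto.pos_mul_atTop (by nlinarith : (0:ℝ) < σ - μ * μ) h1 h2
  refine this.congr fun x => ?_
  rw [div_eq_mul_inv]

lemma tendsto_W (a ν lam : ℝ) {h : ℝ → ℝ} (hHc : Continuous (Hfun a h))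
    {μ σ : ℝ} (hσμ : μ ^ 2 < σ) (hμpos : 0 < μ)
    (hlam : Tendsto (fun x => Hfun a h x / x ^ 2) atTop (𝓝 lam)) :
    Tendsto (Wfun a ν μ σ lam h) (𝓝[Set.Ico (0:ℝ) μ] μ)
      (𝓝 (ν * (Hfun a h μ + lam * (σ - μ ^ 2)))) := by
  have hD : (0:ℝ) < σ - μ ^ 2 := by linarith
  have hDcont : Continuous fun x : ℝ => σ - 2 * μ * x + x ^ 2 := by continuity
  have hDμ : σ - 2 * μ * μ + μ ^ 2 = σ - μ ^ 2 := by ring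
  have tH : Tendsto (Hfun a h) (𝓝[Set.Ico (0:ℝ) μ] μ) (𝓝 (Hfun a h μ)) :=
    (hHc.tendsto μ).mono_left nhdsWithin_le_nhds
  have tA : Tendsto (fun x : ℝ => (σ - μ ^ 2) / (σ - 2 * μ * x + x ^ 2))
      (𝓝[Set.Ico (0:ℝ) μ] μ) (𝓝 1) := by
    have h1 : Tendsto (fun x : ℝ => (σ - μ ^ 2) / (σ - 2 * μ * x + x ^ 2)) (𝓝 μ)
        (𝓝 ((σ - μ ^ 2) / (σ - 2 * μ * μ + μ ^ 2))) :=
      tendsto_const_nhds.div (hDcont.tendsto μ) (by rw [hDμ]; exact hD.ne')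
    rw [hDμ, div_self hD.ne'] at h1
    exact h1.mono_left nhdsWithin_le_nhds
  have tB : Tendsto (fun x : ℝ => (σ - μ * x) ^ 2 / (σ - 2 * μ * x + x ^ 2))
      (𝓝[Set.Ico (0:ℝ) μ] μ) (𝓝 (σ - μ ^ 2)) := by
    have h1 : Tendsto (fun x : ℝ => (σ - μ * x) ^ 2 / (σ - 2 * μ * x + x ^ 2)) (𝓝 μ)
        (𝓝 ((σ - μ * μ) ^ 2 / (σ - 2 * μ * μ + μ ^ 2))) := by
      apply Tendsto.div ?_ (hDcont.tendsto μ) (by rw [hDμ]; exact hD.ne')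
      exact ((continuous_const.sub (continuous_const.mul continuous_id)).pow 2).tendsto μ
    have h2 : (σ - μ * μ) ^ 2 / (σ - 2 * μ * μ + μ ^ 2) = σ - μ ^ 2 := by
      rw [hDμ]; field_simp
    rw [h2] at h1
    exact h1.mono_left nhdsWithin_le_nhds
  have tq : Tendsto (fun x : ℝ => Hfun a h ((σ - μ * x) / (μ - x)) /
      ((σ - μ * x) / (μ - x)) ^ 2) (𝓝[Set.Ico (0:ℝ) μ] μ) (𝓝 lam) :=
    hlam.comp (tendsto_x2_atTop hσμ)
  have tmain := tendsto_const_nhds (x := ν) |>.mul ((tA.mul tH).add (tB.mul tq))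
  have hval : ν * (1 * Hfun a h μ + (σ - μ ^ 2) * lam)
      = ν * (Hfun a h μ + lam * (σ - μ ^ 2)) := by ring
  rw [hval] at tmain
  apply tmain.congr'
  filter_upwards [self_mem_nhdsWithin] with x hx
  obtain ⟨hx0, hxμ⟩ := hx
  have hμx : (0:ℝ) < μ - x := by linarith
  have hDpos : (0:ℝ) < σ - 2 * μ * x + x ^ 2 := by nlinarith
  have hx2pos : (0:ℝ) < (σ - μ * x) / (μ - x) := by
    apply div_pos _ hμx; nlinarith
  have hv : (σ - μ * x) / (μ - x) * (μ - x) = σ - μ * x :=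
    div_mul_cancel₀ _ hμx.ne'
  rw [Wfun, if_neg (ne_of_lt hxμ)]
  set v := (σ - μ * x) / (μ - x) with hvdef
  set y := Hfun a h v with hydef
  have hkey : (μ - x) ^ 2 / (σ - 2 * μ * x + x ^ 2) * y
      = (σ - μ * x) ^ 2 / (σ - 2 * μ * x + x ^ 2) * (y / v ^ 2) := by
    rw [← hv]
    field_simp
  rw [hkey]

lemma WcontOn (a ν lam : ℝ) {h : ℝ → ℝ} (hHc : Continuous (Hfun a h))
    {μ σ : ℝ} (hσμ : μ ^ 2 < σ) (hμpos : 0 < μ)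
    (hlam : Tendsto (fun x => Hfun a h x / x ^ 2) atTop (𝓝 lam)) :
    ContinuousOn (Wfun a ν μ σ lam h) (Set.Icc 0 μ) := by
  have hD : (0:ℝ) < σ - μ ^ 2 := by linarith
  intro x hx
  by_cases hxμ : x = μ
  · rw [hxμ]
    rw [ContinuousWithinAt, ← Set.Ico_union_right hμpos.le, nhdsWithin_union,
      nhdsWithin_singleton]
    rw [tendsto_sup]
    constructor
    · have := tendsto_W a ν lam hHc hσμ hμpos hlam
      have hWμ : Wfun a ν μ σ lam h μ = ν * (Hfun a h μ + lam * (σ - μ ^ 2)) := by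
        rw [Wfun, if_pos rfl]
      rw [hWμ]
      exact this
    · rw [Filter.tendsto_pure_left]
      intro s hs
      exact mem_of_mem_nhds hs
  · have hxlt : x < μ := lt_of_le_of_ne hx.2 hxμ
    have hDx : σ - 2 * μ * x + x ^ 2 ≠ 0 := by nlinarith [hx.1]
    have hμx : μ - x ≠ 0 := by intro hc; apply hxμ; linarith
    have hCA : ContinuousAt (fun y : ℝ => ν * ((σ - μ ^ 2) / (σ - 2 * μ * y + y ^ 2) * Hfun a h y +
        (μ - y) ^ 2 / (σ - 2 * μ * y + y ^ 2) * Hfun a h ((σ - μ * y) / (μ - y)))) x := by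
      have hDcont : Continuous fun y : ℝ => σ - 2 * μ * y + y ^ 2 := by continuity
      have c1 : ContinuousAt (fun y : ℝ => (σ - μ ^ 2) / (σ - 2 * μ * y + y ^ 2)) x :=
        continuousAt_const.div (hDcont.continuousAt) hDx
      have c2 : ContinuousAt (fun y : ℝ => (μ - y) ^ 2 / (σ - 2 * μ * y + y ^ 2)) x :=
        (((continuous_const.sub continuous_id).pow 2).continuousAt).div
          (hDcont.continuousAt) hDx
      have c3 : ContinuousAt (fun y : ℝ => (σ - μ * y) / (μ - y)) x :=
        ((continuous_const.sub (continuous_const.mul continuous_id)).continuousAt).div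
          ((continuous_const.sub continuous_id).continuousAt) hμx
      exact continuousAt_const.mul ((c1.mul hHc.continuousAt).add
        (c2.mul (hHc.continuousAt.comp c3)))
    have hEq : ∀ᶠ y in 𝓝 x, (fun y : ℝ => ν * ((σ - μ ^ 2) / (σ - 2 * μ * y + y ^ 2) * Hfun a h y +
        (μ - y) ^ 2 / (σ - 2 * μ * y + y ^ 2) * Hfun a h ((σ - μ * y) / (μ - y)))) y
        = Wfun a ν μ σ lam h y := by
      filter_upwards [isOpen_compl_singleton.mem_nhds (by simpa using hxμ :
        x ∈ ({μ}ᶜ : Set ℝ))] with y hy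
      rw [Wfun, if_neg (by simpa using hy)]
    exact ((hCA.congr hEq).continuousWithinAt)

/-- Proposition (characterization of `OPT(𝒫₂⁺)`). -/
theorem OPT2_characterization
    (a β η ν : ℝ) (hβ : 0 < β) (hη : 0 < η) (hν : 0 < ν)
    (h : ℝ → ℝ) (hmeas : Measurable h) (hbd : ∃ M, ∀ x, |h x| ≤ M)
    (μ σ : ℝ) (hμ : μ = η / ν) (hσ : σ = 2 * β / ν) (hσμ : μ ^ 2 < σ)
    (lam : ℝ) (hlam : Tendsto (fun x => Hfun a h x / x ^ 2) atTop (𝓝 lam))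
    (hHconv : ConvexOn ℝ (Set.Ici (0:ℝ)) (Hfun a h))
    (hH' : ∃ c : EReal, 0 ≤ c ∧
      ConvexOn ℝ {x : ℝ | 0 < x ∧ (x : EReal) < c} (deriv (Hfun a h)) ∧
      ConcaveOn ℝ {x : ℝ | c < (x : EReal)} (deriv (Hfun a h)))
    (Zstar : ℝ)
    (hZ : Zstar = sSup {z : ℝ | ∃ P : Measure ℝ, MomFeasible μ σ P ∧ SuppAtMost 2 P ∧
      z = ν * ∫ x, Hfun a h x ∂P}) :
    Zstar = sSup ((Wfun a ν μ σ lam h) '' Set.Icc 0 μ) ∧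
    ((¬ ∃ P : Measure ℝ, MomFeasible μ σ P ∧ SuppAtMost 2 P ∧
        ν * ∫ x, Hfun a h x ∂P = Zstar) →
      Zstar = ν * (Hfun a h μ + lam * (σ - μ ^ 2)) ∧
      ∃ x₁ x₂ p₁ p₂ : ℕ → ℝ,
        (∀ k, 0 ≤ x₁ k ∧ 0 ≤ x₂ k ∧ 0 ≤ p₁ k ∧ 0 ≤ p₂ k ∧ p₁ k + p₂ k = 1 ∧
          MomFeasible μ σ (twoPoint (x₁ k) (x₂ k) (p₁ k) (p₂ k))) ∧
        Tendsto (fun k => ν * ∫ x, Hfun a h x ∂(twoPoint (x₁ k) (x₂ k) (p₁ k) (p₂ k)))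
          atTop (𝓝 Zstar) ∧
        Tendsto x₁ atTop (𝓝 μ) ∧ Tendsto x₂ atTop atTop ∧
        Tendsto p₁ atTop (𝓝 1) ∧ Tendsto p₂ atTop (𝓝 0)) := by
  have hμpos : 0 < μ := by rw [hμ]; exact div_pos hη hν
  have hHc : Continuous (Hfun a h) := Hcont hmeas hbd
  set W := Wfun a ν μ σ lam h with hWdef
  set S := {z : ℝ | ∃ P : Measure ℝ, MomFeasible μ σ P ∧ SuppAtMost 2 P ∧
      z = ν * ∫ x, Hfun a h x ∂P} with hSdef
  -- the witness measure associated to `x ∈ Ico 0 μ`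
  have hwitness : ∀ x ∈ Set.Ico (0:ℝ) μ,
      MomFeasible μ σ (twoPoint x ((σ - μ * x) / (μ - x))
        ((σ - μ ^ 2) / (σ - 2 * μ * x + x ^ 2)) ((μ - x) ^ 2 / (σ - 2 * μ * x + x ^ 2))) ∧
      SuppAtMost 2 (twoPoint x ((σ - μ * x) / (μ - x))
        ((σ - μ ^ 2) / (σ - 2 * μ * x + x ^ 2)) ((μ - x) ^ 2 / (σ - 2 * μ * x + x ^ 2))) ∧
      ν * ∫ y, Hfun a h y ∂(twoPoint x ((σ - μ * x) / (μ - x))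
        ((σ - μ ^ 2) / (σ - 2 * μ * x + x ^ 2)) ((μ - x) ^ 2 / (σ - 2 * μ * x + x ^ 2))) = W x := by
    intro x hx
    obtain ⟨c1, c2, c3, c4, c5, c6, c7, c8⟩ := construction a ν lam h hσμ hμpos hx
    obtain ⟨hfeas, hsupp⟩ := feasible_twoPoint c3 (le_of_lt (lt_trans hμpos c4)) c1 c2 c5 c6 c7
    refine ⟨hfeas, hsupp, ?_⟩
    rw [integral_twoPoint _ _ _ _ _ c1 c2]
    exact c8.symm
  have S_eq : S = W '' Set.Ico 0 μ := by
    ext z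
    constructor
    · rintro ⟨P, hF, hS2, rfl⟩
      obtain ⟨x₁, hx₁, hval⟩ := characterization a ν lam hHc hσμ P hF hS2
      exact ⟨x₁, hx₁, hval.symm⟩
    · rintro ⟨x, hx, rfl⟩
      obtain ⟨hfeas, hsupp, hval⟩ := hwitness x hx
      exact ⟨_, hfeas, hsupp, hval.symm⟩
  have hcont : ContinuousOn W (Set.Icc 0 μ) := WcontOn a ν lam hHc hσμ hμpos hlam
  obtain ⟨xs, hxs_mem, hmax⟩ := isCompact_Icc.exists_isMaxOn
    ⟨0, Set.left_mem_Icc.2 hμpos.le⟩ hcont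
  have hgreat : IsGreatest (W '' Set.Icc 0 μ) (W xs) :=
    ⟨Set.mem_image_of_mem _ hxs_mem, by rintro z ⟨y, hy, rfl⟩; exact hmax hy⟩
  have bddIcc : BddAbove (W '' Set.Icc 0 μ) := hgreat.bddAbove
  have bddIco : BddAbove (W '' Set.Ico 0 μ) :=
    bddIcc.mono (Set.image_mono Set.Ico_subset_Icc_self)
  -- the sequence tending to μ from below
  set t : ℕ → ℝ := fun k => μ - μ / (k + 2) with htdef
  have ht_mem : ∀ k, t k ∈ Set.Ico (0:ℝ) μ := by
    intro k
    constructor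
    · simp only [htdef, sub_nonneg]
      exact div_le_self hμpos.le (by push_cast; linarith [Nat.cast_nonneg (α := ℝ) k])
    · simp only [htdef, sub_lt_self_iff]
      positivity
  have ht_tend : Tendsto t atTop (𝓝 μ) := by
    have h0 : Tendsto (fun k : ℕ => μ / ((k:ℝ) + 2)) atTop (𝓝 0) := by
      have := (tendsto_const_div_atTop_nhds_zero_nat μ).comp (tendsto_add_atTop_nat 2)
      refine this.congr fun k => ?_
      simp [Function.comp]
    have := tendsto_const_nhds (x := μ) (f := atTop (α := ℕ)) |>.sub h0
    simpa using this
  have ht_in : Tendsto t atTop (𝓝[Set.Ico (0:ℝ) μ] μ) :=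
    tendsto_nhdsWithin_iff.2 ⟨ht_tend, Eventually.of_forall ht_mem⟩
  have ht_inIcc : Tendsto t atTop (𝓝[Set.Icc (0:ℝ) μ] μ) :=
    tendsto_nhdsWithin_iff.2 ⟨ht_tend,
      Eventually.of_forall fun k => Set.Ico_subset_Icc_self (ht_mem k)⟩
  have htW : Tendsto (fun k => W (t k)) atTop (𝓝 (W μ)) :=
    ((hcont μ (Set.right_mem_Icc.2 hμpos.le)).tendsto).comp ht_inIcc
  have hWμ_le : W μ ≤ sSup (W '' Set.Ico 0 μ) :=
    le_of_tendsto htW (Eventually.of_forall fun k => le_csSup bddIco ⟨t k, ht_mem k, rfl⟩)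
  have hIcoNe : (W '' Set.Ico 0 μ).Nonempty := ⟨W (t 0), t 0, ht_mem 0, rfl⟩
  have hsup_eq : sSup (W '' Set.Ico 0 μ) = sSup (W '' Set.Icc 0 μ) := by
    apply le_antisymm
    · exact csSup_le_csSup bddIcc hIcoNe (Set.image_mono Set.Ico_subset_Icc_self)
    · apply csSup_le (hIcoNe.mono (Set.image_mono Set.Ico_subset_Icc_self))
      rintro z ⟨y, hy, rfl⟩
      by_cases hyμ : y = μ
      · rw [hyμ]; exact hWμ_le
      · exact le_csSup bddIco ⟨y, ⟨hy.1, lt_of_le_of_ne hy.2 hyμ⟩, rfl⟩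
  have hZIco : Zstar = sSup (W '' Set.Ico 0 μ) := by rw [hZ, S_eq]
  have part1 : Zstar = sSup (W '' Set.Icc 0 μ) := by rw [hZIco, hsup_eq]
  refine ⟨part1, ?_⟩
  intro hno
  have hxsval : W xs = Zstar := by rw [part1, hgreat.csSup_eq]
  have hxsμ : xs = μ := by
    by_contra hne
    have hxsIco : xs ∈ Set.Ico (0:ℝ) μ := ⟨hxs_mem.1, lt_of_le_of_ne hxs_mem.2 hne⟩
    obtain ⟨hfeas, hsupp, hval⟩ := hwitness xs hxsIco
    exact hno ⟨_, hfeas, hsupp, by rw [hval, hxsval]⟩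
  have hZW : Zstar = W μ := by rw [← hxsμ, hxsval]
  have hWμval : W μ = ν * (Hfun a h μ + lam * (σ - μ ^ 2)) := by
    rw [hWdef, Wfun, if_pos rfl]
  refine ⟨by rw [hZW, hWμval], ?_⟩
  refine ⟨t, fun k => (σ - μ * t k) / (μ - t k),
    fun k => (σ - μ ^ 2) / (σ - 2 * μ * t k + (t k) ^ 2),
    fun k => (μ - t k) ^ 2 / (σ - 2 * μ * t k + (t k) ^ 2), ?_, ?_, ht_tend, ?_, ?_, ?_⟩
  · intro k
    obtain ⟨c1, c2, c3, c4, c5, c6, c7, c8⟩ := construction a ν lam h hσμ hμpos (ht_mem k)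
    obtain ⟨hfeas, _⟩ := feasible_twoPoint c3 (le_of_lt (lt_trans hμpos c4)) c1 c2 c5 c6 c7
    exact ⟨c3, le_of_lt (lt_trans hμpos c4), c1, c2, c5, hfeas⟩
  · have : ∀ k, ν * ∫ x, Hfun a h x ∂(twoPoint (t k) ((σ - μ * t k) / (μ - t k))
        ((σ - μ ^ 2) / (σ - 2 * μ * t k + (t k) ^ 2))
        ((μ - t k) ^ 2 / (σ - 2 * μ * t k + (t k) ^ 2))) = W (t k) := by
      intro k
      exact (hwitness (t k) (ht_mem k)).2.2
    rw [hZW]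
    exact htW.congr fun k => (this k).symm
  · exact (tendsto_x2_atTop hσμ).comp ht_in
  · have hcD : Continuous fun y : ℝ => σ - 2 * μ * y + y ^ 2 :=
      (continuous_const.sub (continuous_const.mul continuous_id)).add (continuous_pow 2)
    have hc : ContinuousAt (fun y : ℝ => (σ - μ ^ 2) / (σ - 2 * μ * y + y ^ 2)) μ := by
      apply continuousAt_const.div hcD.continuousAt
      nlinarith
    have := hc.tendsto.comp ht_tend
    have hval : (σ - μ ^ 2) / (σ - 2 * μ * μ + μ ^ 2) = 1 := by
      rw [show σ - 2 * μ * μ + μ ^ 2 = σ - μ ^ 2 by ring]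
      exact div_self (by nlinarith)
    rw [hval] at this
    exact this
  · have hcD : Continuous fun y : ℝ => σ - 2 * μ * y + y ^ 2 :=
      (continuous_const.sub (continuous_const.mul continuous_id)).add (continuous_pow 2)
    have hcN : Continuous fun y : ℝ => (μ - y) ^ 2 :=
      (continuous_const.sub continuous_id).pow 2
    have hc : ContinuousAt (fun y : ℝ => (μ - y) ^ 2 / (σ - 2 * μ * y + y ^ 2)) μ := by
      apply ContinuousAt.div hcN.continuousAt hcD.continuousAt
      nlinarith
    have := hc.tendsto.comp ht_tend
    have hval : (μ - μ) ^ 2 / (σ - 2 * μ * μ + μ ^ 2) = 0 := by simp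
    rw [hval] at this
    exact this
end

section
/- Let a ∈ ℝ and 0 < β̲ ≤ β̄, 0 < η̲ ≤ η̄, ν̄ > 0. Then there exists a feasible f for the relaxed worst-case tail problem if and only if η̲² ≤ 2β̄ν̄ (equivalently σ̄ ≥ μ̲²). Moreover, when η̲² = 2β̄ν̄, the unique feasible f satisfies f(x) = max(η̲ − ν̄(x − a), 0) for all x ≥ a. -/
open MeasureTheory Set Filter Topology

/-- `f` is feasible for the relaxed worst-case tail problem with parameters
`(a, β̲, β̄, η̲, η̄, ν̄)`. -/
def RFeasible (a βl βu ηl ηu ν : ℝ) (f : ℝ → ℝ) : Prop :=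
  IntegrableOn f (Set.Ioi a) ∧
  βl ≤ (∫ x in Set.Ioi a, f x) ∧ (∫ x in Set.Ioi a, f x) ≤ βu ∧
  ηl ≤ f a ∧ f a ≤ ηu ∧
  ContinuousWithinAt f (Set.Ici a) a ∧
  HasRightDerivAt f a ∧
  -ν ≤ rightDeriv f a ∧
  ConvexOn ℝ (Set.Ici a) f ∧
  (∀ x, a ≤ x → 0 ≤ f x)

lemma convexOn_tent (s : Set ℝ) (hs : Convex ℝ s) (c m a : ℝ) :
    ConvexOn ℝ s (fun x => max (c - m * (x - a)) 0) := by
  refine ⟨hs, fun x _ y _ p q hp hq hpq => ?_⟩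
  simp only [smul_eq_mul]
  refine max_le ?_ (by positivity)
  have h1 : c - m * (p * x + q * y - a) = p * (c - m * (x - a)) + q * (c - m * (y - a)) := by
    have : q = 1 - p := by linarith
    subst this; ring
  rw [h1]
  gcongr <;> exact le_max_left _ _

lemma tent_eq_zero (a c m : ℝ) (hm : 0 < m) {x : ℝ} (hx : a + c / m ≤ x) :
    max (c - m * (x - a)) 0 = 0 := by
  refine max_eq_right ?_
  have : c / m ≤ x - a := by linarith
  nlinarith [(div_le_iff₀ hm).mp this]

lemma tent_eq_lin (a c m : ℝ) (hm : 0 < m) {x : ℝ} (hx : x ≤ a + c / m) :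
    max (c - m * (x - a)) 0 = c - m * (x - a) := by
  refine max_eq_left ?_
  have : x - a ≤ c / m := by linarith
  nlinarith [(le_div_iff₀ hm).mp this]

lemma integrableOn_tent (a c m : ℝ) (hc : 0 < c) (hm : 0 < m) :
    IntegrableOn (fun x => max (c - m * (x - a)) 0) (Set.Ioi a) := by
  have hcont : Continuous (fun x : ℝ => max (c - m * (x - a)) 0) :=
    (continuous_const.sub (continuous_const.mul (continuous_id.sub continuous_const))).max
      continuous_const
  have hb : a ≤ a + c / m := by nlinarith [div_pos hc hm]
  rw [← Set.Ioc_union_Ioi_eq_Ioi hb]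
  refine IntegrableOn.union (hcont.integrableOn_Ioc) ?_
  refine (integrableOn_congr_fun (g := fun _ => (0:ℝ)) ?_ measurableSet_Ioi).mpr
    (integrableOn_zero)
  intro x hx
  exact tent_eq_zero a c m hm (le_of_lt hx)

lemma integral_tent (a c m : ℝ) (hc : 0 < c) (hm : 0 < m) :
    (∫ x in Set.Ioi a, max (c - m * (x - a)) 0) = c ^ 2 / (2 * m) := by
  have hb : a ≤ a + c / m := by nlinarith [div_pos hc hm]
  have hcont : Continuous (fun x : ℝ => max (c - m * (x - a)) 0) :=
    (continuous_const.sub (continuous_const.mul (continuous_id.sub continuous_const))).max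
      continuous_const
  rw [← Set.Ioc_union_Ioi_eq_Ioi hb,
    setIntegral_union (Set.Ioc_disjoint_Ioi le_rfl) measurableSet_Ioi
      hcont.integrableOn_Ioc
      (by
        refine (integrableOn_congr_fun (g := fun _ => (0:ℝ)) ?_ measurableSet_Ioi).mpr
          integrableOn_zero
        intro x hx; exact tent_eq_zero a c m hm (le_of_lt hx))]
  have h2 : (∫ x in Set.Ioi (a + c / m), max (c - m * (x - a)) 0) = 0 := by
    rw [setIntegral_congr_fun measurableSet_Ioi
      (fun x hx => tent_eq_zero a c m hm (le_of_lt hx))]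
    simp
  have h1 : (∫ x in Set.Ioc a (a + c / m), max (c - m * (x - a)) 0)
      = ∫ x in a..(a + c / m), (c - m * (x - a)) := by
    rw [intervalIntegral.integral_of_le hb]
    exact setIntegral_congr_fun measurableSet_Ioc
      (fun x hx => tent_eq_lin a c m hm hx.2)
  rw [h1, h2, add_zero]
  have : (∫ x in a..(a + c / m), (c - m * (x - a)))
      = (∫ x in a..(a + c / m), (c : ℝ)) - m * ∫ x in a..(a + c / m), (x - a) := by
    rw [← intervalIntegral.integral_const_mul, ← intervalIntegral.integral_sub]
    · exact intervalIntegrable_const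
    · exact (IntervalIntegrable.sub intervalIntegral.intervalIntegrable_id
        intervalIntegrable_const).const_mul m
  rw [this]
  have h3 : (∫ x in a..(a + c / m), (x - a))
      = (∫ x in a..(a + c / m), x) - ∫ x in a..(a + c / m), (a:ℝ) :=
    intervalIntegral.integral_sub intervalIntegral.intervalIntegrable_id intervalIntegrable_const
  rw [h3, intervalIntegral.integral_const, intervalIntegral.integral_const, integral_id]
  simp only [smul_eq_mul]
  field_simp
  ring

lemma convex_lower (a d ν ηl : ℝ) (f : ℝ → ℝ)
    (hconv : ConvexOn ℝ (Set.Ici a) f)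
    (hd : HasDerivWithinAt f d (Set.Ioi a) a)
    (hfa : ηl ≤ f a) (hdν : -ν ≤ d)
    (hpos : ∀ x, a ≤ x → 0 ≤ f x) :
    ∀ x, a ≤ x → max (ηl - ν * (x - a)) 0 ≤ f x := by
  intro x hx
  refine max_le ?_ (hpos x hx)
  rcases eq_or_lt_of_le hx with rfl | hax
  · simpa using hfa
  have hdiff : Set.Ioi a \ {a} = Set.Ioi a := Set.diff_singleton_eq_self (by simp)
  have htends : Tendsto (slope f a) (𝓝[Set.Ioi a] a) (𝓝 d) := by
    have := (hasDerivWithinAt_iff_tendsto_slope).mp hd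
    rwa [hdiff] at this
  have hslope : d ≤ slope f a x := by
    refine le_of_tendsto htends ?_
    have h1 : ∀ᶠ y in 𝓝[Set.Ioi a] a, y < x :=
      ((eventually_lt_nhds hax).filter_mono nhdsWithin_le_nhds)
    filter_upwards [h1, self_mem_nhdsWithin] with y hy hy'
    have hya : a < y := hy'
    have := hconv.secant_mono (Set.self_mem_Ici) (le_of_lt hya) (le_of_lt hax)
      (ne_of_gt hya) (ne_of_gt hax) (le_of_lt hy)
    simpa [slope_def_field] using this
  have hxa : 0 < x - a := sub_pos.mpr hax
  have : d * (x - a) ≤ f x - f a := by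
    have := (le_div_iff₀ hxa).mp (by simpa [slope_def_field] using hslope)
    linarith
  nlinarith [mul_le_mul_of_nonneg_right hdν (le_of_lt hxa)]

/-- The tent function is feasible when parameters are set up correctly. -/
lemma tent_hasDerivWithinAt (a c m : ℝ) (hc : 0 < c) (hm : 0 < m) :
    HasDerivWithinAt (fun x => max (c - m * (x - a)) 0) (-m) (Set.Ioi a) a := by
  have hlin : HasDerivWithinAt (fun x : ℝ => c - m * (x - a)) (-m) (Set.Ioi a) a := by
    have h := (((hasDerivAt_id a).sub_const a).const_mul m).const_sub c
    simpa using h.hasDerivWithinAt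
  refine hlin.congr_of_eventuallyEq ?_ ?_
  · have hU : Set.Iio (a + c / m) ∈ 𝓝[Set.Ioi a] a := by
      refine nhdsWithin_le_nhds (Iio_mem_nhds ?_)
      nlinarith [div_pos hc hm]
    filter_upwards [hU] with x hx
    exact tent_eq_lin a c m hm (le_of_lt hx)
  · simpa using tent_eq_lin a c m hm (by nlinarith [div_pos hc hm] : a ≤ a + c / m)

lemma tent_feasible (a βl βu ηl ηu ν : ℝ)
    (hβl : 0 < βl) (hβ : βl ≤ βu) (hηl : 0 < ηl) (hη : ηl ≤ ηu) (hν : 0 < ν)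
    (h : ηl ^ 2 ≤ 2 * βu * ν) :
    RFeasible a βl βu ηl ηu ν (fun x => max (ηl - (ηl ^ 2 / (2 * max βl (ηl ^ 2 / (2 * ν)))) * (x - a)) 0) := by
  set t : ℝ := max βl (ηl ^ 2 / (2 * ν)) with ht
  have htpos : 0 < t := lt_of_lt_of_le hβl (le_max_left _ _)
  have htβu : t ≤ βu := by
    refine max_le hβ ?_
    rw [div_le_iff₀ (by positivity)]
    linarith
  set m : ℝ := ηl ^ 2 / (2 * t) with hmdef
  have hm : 0 < m := by positivity
  have hmν : m ≤ ν := by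
    rw [hmdef, div_le_iff₀ (by positivity)]
    have h2 : ηl ^ 2 / (2 * ν) ≤ t := le_max_right _ _
    rw [div_le_iff₀ (by positivity)] at h2
    linarith
  have hint : (∫ x in Set.Ioi a, max (ηl - m * (x - a)) 0) = t := by
    rw [integral_tent a ηl m hηl hm, hmdef]
    field_simp
  have hfa : max (ηl - m * (a - a)) 0 = ηl := by
    simp [le_of_lt hηl]
  refine ⟨integrableOn_tent a ηl m hηl hm, ?_, ?_, ?_, ?_, ?_, ?_, ?_, ?_, ?_⟩
  · rw [hint]; exact le_max_left _ _
  · rw [hint]; exact htβu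
  · show ηl ≤ max (ηl - m * (a - a)) 0; rw [hfa]
  · show max (ηl - m * (a - a)) 0 ≤ ηu; rw [hfa]; exact hη
  · exact ((continuous_const.sub (continuous_const.mul
      (continuous_id.sub continuous_const))).max continuous_const).continuousWithinAt
  · exact ⟨-m, tent_hasDerivWithinAt a ηl m hηl hm⟩
  · have := (tent_hasDerivWithinAt a ηl m hηl hm).derivWithin (uniqueDiffWithinAt_Ioi a)
    rw [rightDeriv, this]
    linarith
  · exact convexOn_tent _ (convex_Ici a) ηl m a
  · intro x _; exact le_max_right _ _

/-- Lemma (consistency of the relaxed problem): feasibility holds iff `η̲² ≤ 2β̄ν̄`,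
and in the boundary case `η̲² = 2β̄ν̄` the feasible solution is unique. -/
theorem relaxed_consistency
    (a βl βu ηl ηu ν : ℝ)
    (hβl : 0 < βl) (hβ : βl ≤ βu) (hηl : 0 < ηl) (hη : ηl ≤ ηu) (hν : 0 < ν) :
    ((∃ f : ℝ → ℝ, RFeasible a βl βu ηl ηu ν f) ↔ ηl ^ 2 ≤ 2 * βu * ν) ∧
    (ηl ^ 2 = 2 * βu * ν → ∀ f : ℝ → ℝ, RFeasible a βl βu ηl ηu ν f →
      ∀ x, a ≤ x → f x = max (ηl - ν * (x - a)) 0) := by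
  constructor
  · constructor
    · rintro ⟨f, hint, hβlf, hβuf, hηlf, hηuf, hcont, ⟨d, hd⟩, hdν, hconv, hpos⟩
      have hdval : rightDeriv f a = d := hd.derivWithin (uniqueDiffWithinAt_Ioi a)
      rw [hdval] at hdν
      have hlow := convex_lower a d ν ηl f hconv hd hηlf hdν hpos
      have hmono : (∫ x in Set.Ioi a, max (ηl - ν * (x - a)) 0) ≤ ∫ x in Set.Ioi a, f x :=
        setIntegral_mono_on (integrableOn_tent a ηl ν hηl hν) hint measurableSet_Ioi
          (fun x hx => hlow x (le_of_lt hx))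
      rw [integral_tent a ηl ν hηl hν] at hmono
      have h2 : ηl ^ 2 / (2 * ν) ≤ βu := le_trans hmono hβuf
      rw [div_le_iff₀ (by positivity)] at h2
      linarith
    · intro h
      exact ⟨_, tent_feasible a βl βu ηl ηu ν hβl hβ hηl hη hν h⟩
  · intro heq f hf x hx
    obtain ⟨hint, hβlf, hβuf, hηlf, hηuf, hcont, ⟨d, hd⟩, hdν, hconv, hpos⟩ := hf
    have hdval : rightDeriv f a = d := hd.derivWithin (uniqueDiffWithinAt_Ioi a)
    rw [hdval] at hdν
    have hlow := convex_lower a d ν ηl f hconv hd hηlf hdν hpos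
    set g : ℝ → ℝ := fun y => max (ηl - ν * (y - a)) 0 with hgdef
    have hgcont : Continuous g :=
      (continuous_const.sub (continuous_const.mul (continuous_id.sub continuous_const))).max
        continuous_const
    have hgi : IntegrableOn g (Set.Ioi a) := integrableOn_tent a ηl ν hηl hν
    have hgint : (∫ y in Set.Ioi a, g y) = βu := by
      rw [hgdef]
      rw [integral_tent a ηl ν hηl hν, heq]
      field_simp
    have hmono : (∫ y in Set.Ioi a, g y) ≤ ∫ y in Set.Ioi a, f y :=
      setIntegral_mono_on hgi hint measurableSet_Ioi (fun y hy => hlow y (le_of_lt hy))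
    have hzero : (∫ y in Set.Ioi a, (f y - g y)) = 0 := by
      rw [integral_sub hint hgi]
      linarith
    have hae : f =ᵐ[volume.restrict (Set.Ioi a)] g := by
      have hnn : 0 ≤ᵐ[volume.restrict (Set.Ioi a)] fun y => f y - g y :=
        (ae_restrict_iff' measurableSet_Ioi).mpr
          (Eventually.of_forall fun y hy => sub_nonneg.mpr (hlow y (le_of_lt hy)))
      have hz := (integral_eq_zero_iff_of_nonneg_ae hnn (hint.sub hgi)).mp hzero
      filter_upwards [hz] with y hy
      have : f y - g y = 0 := hy
      linarith
    have hfc : ContinuousOn f (Set.Ioi a) := by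
      have := hconv.continuousOn_interior
      rwa [interior_Ici] at this
    have heqOn : Set.EqOn f g (Set.Ioi a) :=
      Measure.eqOn_of_ae_eq hae hfc hgcont.continuousOn
        (by rw [interior_Ioi]; exact subset_closure)
    rcases eq_or_lt_of_le hx with rfl | hax
    · -- x = a : use continuity from the right
      have h1 : Tendsto f (𝓝[Set.Ioi a] a) (𝓝 (f a)) :=
        hcont.mono_left (nhdsWithin_mono a Set.Ioi_subset_Ici_self)
      have h2 : Tendsto g (𝓝[Set.Ioi a] a) (𝓝 (f a)) := by
        refine h1.congr' ?_
        filter_upwards [self_mem_nhdsWithin] with y hy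
        exact heqOn hy
      have h3 : Tendsto g (𝓝[Set.Ioi a] a) (𝓝 (g a)) :=
        (hgcont.tendsto a).mono_left nhdsWithin_le_nhds
      exact tendsto_nhds_unique h2 h3
    · exact heqOn hax
end
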